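/- arXiv:1610.07495 — 4 statements merged into one kernel-verified Lean document; each statement's English description precedes it below -/
import Mathlib

section
/- Suppose A is a commutative noetherian ring and n ≥ 2 is an integer. Then the map ζ : LO(A,n) → π_0(Q_{2n})(A) descends to a bijection from π_0(LO(A,n)) onto π_0(Q_{2n})(A), whose inverse is induced by the map η : Q_{2n}(A) → LO(A,n). -/
open Polynomial

section Core
variable (A : Type*) [CommRing A] (n : ℕ)

/-- The underlying affine space `A^{2n+1}` with coordinates `(s; f₁,…,fₙ; g₁,…,gₙ)`. -/
abbrev QVec := A × (Fin n → A) × (Fin n → A)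

/-- The defining equation of the quadric `Q_{2n}`:  `Σ fᵢ gᵢ + s(s-1) = 0`. -/
def IsQPt (v : QVec A n) : Prop :=
  (∑ i, v.2.1 i * v.2.2 i) + v.1 * (v.1 - 1) = 0

/-- `Q_{2n}(A)`. -/
def QPt := {v : QVec A n // IsQPt A n v}

def zeroQPt : QPt A n := ⟨(0, 0, 0), by simp [IsQPt]⟩

def oneQPt : QPt A n := ⟨(1, 0, 0), by simp [IsQPt]⟩

/-- The involution `Γ(s; f; g) = (1-s; f; g)`. -/
def gammaQ (v : QPt A n) : QPt A n :=
  ⟨(1 - v.1.1, v.1.2.1, v.1.2.2), by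
    have h := v.2
    simp only [IsQPt] at h ⊢
    linear_combination h⟩

/-- Substitution `T = t` on points of `Q_{2n}(A[T])`. -/
def evalQ (t : A) (v : QPt (Polynomial A) n) : QPt A n :=
  ⟨((v.1.1).eval t, fun i => (v.1.2.1 i).eval t, fun i => (v.1.2.2 i).eval t), by
    have h := congrArg (Polynomial.eval t) v.2
    simpa [IsQPt, Polynomial.eval_finset_sum] using h⟩

/-- The elementary homotopy relation on `Q_{2n}(A)`. -/
def QHomRel : QPt A n → QPt A n → Prop := fun u v =>
  ∃ H : QPt (Polynomial A) n, evalQ A n 0 H = u ∧ evalQ A n 1 H = v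

/-- `π₀(Q_{2n})(A)`: the quotient of `Q_{2n}(A)` by the equivalence relation generated by
homotopies. -/
def Pi0Q := Quot (QHomRel A n)

/-- The quotient map `ζ₀`. -/
def zeta0 : QPt A n → Pi0Q A n := Quot.mk _

/-- The ideal `𝕀(v) = (f₁,…,fₙ,s)`. -/
def IdealI (v : QPt A n) : Ideal A :=
  Ideal.span (insert v.1.1 (Set.range v.1.2.1))

/-- The ideal `𝕁(v) = (f₁,…,fₙ,1-s)`. -/
def IdealJ (v : QPt A n) : Ideal A :=
  Ideal.span (insert (1 - v.1.1) (Set.range v.1.2.1))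

/-- `ω : A^n → I/I²` is induced by `f₁,…,fₙ`, i.e. `ω(eᵢ) = fᵢ mod I²`. -/
def InducedBy (I : Ideal A) (ω : (Fin n → A) →ₗ[A] I.Cotangent) (f : Fin n → A) : Prop :=
  ∀ i : Fin n, ∃ h : f i ∈ I, ω (Pi.single i 1) = I.toCotangent ⟨f i, h⟩

/-- `η(v) = (I, ω)`, i.e. `I = 𝕀(v)` and `ω = ω_v`. -/
def EtaEq (v : QPt A n) (I : Ideal A) (ω : (Fin n → A) →ₗ[A] I.Cotangent) : Prop :=
  IdealI A n v = I ∧ InducedBy A n I ω v.1.2.1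

/-- `ζ(I, ω) = x`: the (well-defined) homotopy obstruction class of the local orientation
`(I, ω)` is `x`. -/
def ZetaEq (I : Ideal A) (ω : (Fin n → A) →ₗ[A] I.Cotangent) (x : Pi0Q A n) : Prop :=
  (∃ v, EtaEq A n v I ω) ∧ ∀ v, EtaEq A n v I ω → zeta0 A n v = x

/-- `height I ≥ m` (Krull height; the unit ideal has height `≥ m` for every `m`). -/
def HeightGE (I : Ideal A) (m : ℕ) : Prop :=
  ∀ (P : Ideal A) (hP : P.IsPrime), I ≤ P →
    (m : ℕ∞) ≤ Order.height (⟨P, hP⟩ : PrimeSpectrum A)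

/-- `x ≡ y mod I²` for `x, y ∈ I`. -/
def SameClass (I : Ideal A) (x y : A) : Prop :=
  ∃ (hx : x ∈ I) (hy : y ∈ I), I.toCotangent ⟨x, hx⟩ = I.toCotangent ⟨y, hy⟩

/-- `ω = ω₁ ⋆ ω₂` : the orientation on `I₁I₂` induced by `ω₁` and `ω₂`. -/
def StarEq (I₁ I₂ : Ideal A) (ω₁ : (Fin n → A) →ₗ[A] I₁.Cotangent)
    (ω₂ : (Fin n → A) →ₗ[A] I₂.Cotangent)
    (ω : (Fin n → A) →ₗ[A] (I₁ * I₂).Cotangent) : Prop :=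
  ∀ i : Fin n, ∃ (h : A) (hm : h ∈ I₁ * I₂) (h₁ : h ∈ I₁) (h₂ : h ∈ I₂),
    ω (Pi.single i 1) = (I₁ * I₂).toCotangent ⟨h, hm⟩ ∧
    ω₁ (Pi.single i 1) = I₁.toCotangent ⟨h, h₁⟩ ∧
    ω₂ (Pi.single i 1) = I₂.toCotangent ⟨h, h₂⟩

/-- A regular local ring: noetherian local, whose maximal ideal is generated by
`dim R` elements. -/
def IsRegularLocal (R : Type*) [CommRing R] : Prop :=
  IsNoetherianRing R ∧
    ∃ _h : IsLocalRing R, ∃ s : Finset R,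
      Ideal.span (s : Set R) = IsLocalRing.maximalIdeal R ∧
      (s.card : WithBot ℕ∞) = ringKrullDim R

/-- A (commutative noetherian) ring is regular if all its localizations at primes are
regular local rings. -/
def IsRegularRing' (R : Type*) [CommRing R] : Prop :=
  IsNoetherianRing R ∧
    ∀ (P : Ideal R) (_ : P.IsPrime), IsRegularLocal (Localization.AtPrime P)

end Core

/-- A (bundled) local `n`-orientation: an ideal `I` together with a surjection
`ω : A^n → I/I²`. -/
structure LOr (A : Type*) [CommRing A] (n : ℕ) where
  I : Ideal A
  ω : (Fin n → A) →ₗ[A] I.Cotangent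
  surj : Function.Surjective ω

/-- `H̃(t) = L` : specialization at `T = t` of an orientation over `A[T]`. -/
def LoSpec (A : Type*) [CommRing A] (n : ℕ) (H : LOr (Polynomial A) n) (t : A)
    (L : LOr A n) : Prop :=
  L.I = H.I.map (Polynomial.evalRingHom t) ∧
  ∀ j : Fin n, ∃ (F : Polynomial A) (hF : F ∈ H.I),
    H.ω (Pi.single j 1) = H.I.toCotangent ⟨F, hF⟩ ∧
    ∃ hF' : F.eval t ∈ L.I, L.ω (Pi.single j 1) = L.I.toCotangent ⟨F.eval t, hF'⟩

/-- The elementary homotopy relation on `LO(A, n)`. -/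
def LoRel (A : Type*) [CommRing A] (n : ℕ) : LOr A n → LOr A n → Prop := fun L₀ L₁ =>
  ∃ H : LOr (Polynomial A) n, LoSpec A n H 0 L₀ ∧ LoSpec A n H 1 L₁

/-- `π₀(LO(A, n))`. -/
def Pi0LO (A : Type*) [CommRing A] (n : ℕ) := Quot (LoRel A n)


theorem key_nak {R : Type*} [CommRing R] (I J : Ideal R) (hFG : I.FG) (hJI : J ≤ I)
    (hIJ : I ≤ J ⊔ I ^ 2) :
    ∃ e ∈ I, e * (e - 1) ∈ J ∧ (∀ x ∈ I, (1 - e) * x ∈ J) ∧ I = J ⊔ Ideal.span {e} := by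
  let π := Ideal.Quotient.mk J
  set Ib := I.map π with hIb
  have hfg : Ib.FG := Ideal.FG.map hFG π
  have hle : Ib ≤ Ib • Ib := by
    have h2 : I.map π ≤ (I ^ 2).map π := by
      calc I.map π ≤ (J ⊔ I ^ 2).map π := Ideal.map_mono hIJ
        _ = J.map π ⊔ (I ^ 2).map π := Ideal.map_sup _ _ _
        _ = (I ^ 2).map π := by rw [Ideal.map_quotient_self]; exact bot_sup_eq _
    rw [Ideal.smul_eq_mul, ← pow_two, ← Ideal.map_pow]
    exact h2
  obtain ⟨r, hr1, hr0⟩ :=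
    Submodule.exists_sub_one_mem_and_smul_eq_zero_of_fg_of_le_smul Ib Ib hfg hle
  have h1r : (1 : R ⧸ J) - r ∈ Ib := by
    have := Ib.neg_mem hr1; simpa using this
  obtain ⟨e, heI, hee⟩ := Ideal.mem_image_of_mem_map_of_surjective π
    Ideal.Quotient.mk_surjective h1r
  have hkey : ∀ x ∈ I, (1 - e) * x ∈ J := by
    intro x hx
    rw [← Ideal.Quotient.eq_zero_iff_mem]
    have hπx : π x ∈ Ib := Ideal.mem_map_of_mem π hx
    have h3 : π ((1 - e) * x) = r * π x := by
      simp only [π, map_mul, map_sub, map_one, hee]; ring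
    rw [show (Ideal.Quotient.mk J) ((1-e)*x) = π ((1-e)*x) from rfl, h3, ← smul_eq_mul]
    exact hr0 _ hπx
  refine ⟨e, heI, ?_, hkey, ?_⟩
  · have : e * (e - 1) = -((1 - e) * e) := by ring
    rw [this]
    exact J.neg_mem (hkey e heI)
  · apply le_antisymm
    · intro x hx
      have hxe : x = (1 - e) * x + x * e := by ring
      rw [hxe]
      refine Ideal.add_mem _ (Ideal.mem_sup_left (hkey x hx)) ?_
      exact Ideal.mem_sup_right (Ideal.mem_span_singleton.mpr ⟨x, mul_comm x e⟩)
    · refine sup_le hJI ?_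
      rw [Ideal.span_le, Set.singleton_subset_iff]
      exact heI

theorem idem_unique {R : Type*} [CommRing R] (J : Ideal R) (a b : R)
    (ha : a * (a - 1) ∈ J) (hb : b * (b - 1) ∈ J)
    (hab : J ⊔ Ideal.span {a} = J ⊔ Ideal.span {b}) : a - b ∈ J := by
  let π := Ideal.Quotient.mk J
  have haJ : a ∈ J ⊔ Ideal.span {b} := by
    rw [← hab]; exact Ideal.mem_sup_right (Ideal.mem_span_singleton_self a)
  have hbJ : b ∈ J ⊔ Ideal.span {a} := by
    rw [hab]; exact Ideal.mem_sup_right (Ideal.mem_span_singleton_self b)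
  obtain ⟨j₁, hj₁, x₁, hx₁, hax⟩ := Submodule.mem_sup.mp haJ
  obtain ⟨r₁, hr₁⟩ := Ideal.mem_span_singleton'.mp hx₁
  obtain ⟨j₂, hj₂, x₂, hx₂, hbx⟩ := Submodule.mem_sup.mp hbJ
  obtain ⟨r₂, hr₂⟩ := Ideal.mem_span_singleton'.mp hx₂
  have e1 : π a = π (r₁ * b) := Ideal.Quotient.eq.mpr (by
    have h : a - r₁ * b = j₁ := by rw [hr₁]; linear_combination -hax
    rw [h]; exact hj₁)
  have e2 : π b = π (r₂ * a) := Ideal.Quotient.eq.mpr (by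
    have h : b - r₂ * a = j₂ := by rw [hr₂]; linear_combination -hbx
    rw [h]; exact hj₂)
  have ea : π a * π a = π a := by
    rw [← map_mul]
    exact Ideal.Quotient.eq.mpr (by have h : a * a - a = a * (a - 1) := by ring
                                    rw [h]; exact ha)
  have eb : π b * π b = π b := by
    rw [← map_mul]
    exact Ideal.Quotient.eq.mpr (by have h : b * b - b = b * (b - 1) := by ring
                                    rw [h]; exact hb)
  have e1' : π a = π r₁ * π b := by rw [e1, map_mul]
  have e2' : π b = π r₂ * π a := by rw [e2, map_mul]
  have c1 : π a * π b = π a := by linear_combination (π b) * e1' + (π r₁) * eb - e1'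
  have c2 : π a * π b = π b := by linear_combination (π a) * e2' + (π r₂) * ea - e2'
  have hfin : π a = π b := by linear_combination c2 - c1
  rw [← Ideal.Quotient.eq_zero_iff_mem]
  rw [map_sub]
  exact sub_eq_zero.mpr hfin

section Aux
variable {A : Type*} [CommRing A] {n : ℕ}

lemma sum_single_mul (f : Fin n → A) (j : Fin n) :
    ∑ i, (Pi.single j 1 : Fin n → A) i * f i = f j := by
  rw [Finset.sum_eq_single j]
  · simp
  · intro i _ hij; rw [Pi.single_eq_of_ne hij, zero_mul]
  · simp

lemma mem_idealI_f (v : QPt A n) (i : Fin n) : v.1.2.1 i ∈ IdealI A n v :=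
  Ideal.subset_span (Set.mem_insert_of_mem _ ⟨i, rfl⟩)

lemma mem_idealI_s (v : QPt A n) : v.1.1 ∈ IdealI A n v :=
  Ideal.subset_span (Set.mem_insert _ _)

/-- The linear map `A^n → I` given by `c ↦ Σ cᵢ fᵢ`. -/
def linOf (I : Ideal A) (f : Fin n → A) (hf : ∀ i, f i ∈ I) : (Fin n → A) →ₗ[A] I where
  toFun c := ⟨∑ i, c i * f i, Ideal.sum_mem I fun i _ => I.mul_mem_left _ (hf i)⟩
  map_add' x y := by
    ext
    simp [add_mul, Finset.sum_add_distrib]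
  map_smul' a x := by
    ext
    simp [Finset.mul_sum, mul_assoc]

/-- The induced orientation `A^n → I/I²`. -/
def omegaOf (I : Ideal A) (f : Fin n → A) (hf : ∀ i, f i ∈ I) :
    (Fin n → A) →ₗ[A] I.Cotangent :=
  I.toCotangent ∘ₗ linOf I f hf

lemma omegaOf_single (I : Ideal A) (f : Fin n → A) (hf : ∀ i, f i ∈ I) (j : Fin n) :
    omegaOf I f hf (Pi.single j 1) = I.toCotangent ⟨f j, hf j⟩ := by
  show I.toCotangent (linOf I f hf (Pi.single j 1)) = _
  congr 1
  exact Subtype.ext (sum_single_mul f j)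

lemma omegaOf_apply (I : Ideal A) (f : Fin n → A) (hf : ∀ i, f i ∈ I) (c : Fin n → A)
    (hc : ∑ i, c i * f i ∈ I) :
    omegaOf I f hf c = I.toCotangent ⟨∑ i, c i * f i, hc⟩ := rfl

/-- Surjectivity of the induced orientation for a quadric point. -/
lemma omegaOf_surj (v : QPt A n) :
    Function.Surjective (omegaOf (IdealI A n v) v.1.2.1 (mem_idealI_f v)) := by
  obtain ⟨⟨s, f, g⟩, hq⟩ := v
  set v : QPt A n := ⟨(s, f, g), hq⟩ with hv
  set I := IdealI A n v with hI
  intro z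
  obtain ⟨⟨x, hx⟩, rfl⟩ := I.toCotangent_surjective z
  have hx' : x ∈ Ideal.span (insert s (Set.range f)) := hx
  rw [Ideal.mem_span_insert] at hx'
  obtain ⟨a, z', hz', hxz⟩ := hx'
  obtain ⟨b, hb⟩ := (Submodule.mem_span_range_iff_exists_fun A).mp hz'
  simp only [smul_eq_mul] at hb
  refine ⟨fun i => a * g i + b i, ?_⟩
  rw [omegaOf_apply _ _ _ _ (Ideal.sum_mem I fun i _ => I.mul_mem_left _ (mem_idealI_f v i))]
  rw [Ideal.toCotangent_eq]
  have hsum : ∑ i, (a * g i + b i) * f i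
      = a * (∑ i, f i * g i) + ∑ i, b i * f i := by
    rw [Finset.mul_sum, ← Finset.sum_add_distrib]
    exact Finset.sum_congr rfl fun i _ => by ring
  simp only [IsQPt] at hq
  have heq : (∑ i, (a * g i + b i) * f i) - x = -(a * (s * s)) := by
    rw [hsum]
    linear_combination a * hq + hb - hxz
  have hmem : s * s ∈ I ^ 2 := by
    rw [pow_two]; exact Ideal.mul_mem_mul (mem_idealI_s v) (mem_idealI_s v)
  show (_ : A) - _ ∈ I ^ 2
  rw [heq]
  exact (I ^ 2).neg_mem ((I ^ 2).mul_mem_left a hmem)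

/-- `η` as a map `Q_{2n}(A) → LO(A,n)`. -/
def etaL (v : QPt A n) : LOr A n :=
  ⟨IdealI A n v, omegaOf _ _ (mem_idealI_f v), omegaOf_surj v⟩

lemma etaEq_etaL (v : QPt A n) : EtaEq A n v (etaL v).I (etaL v).ω :=
  ⟨rfl, fun i => ⟨mem_idealI_f v i, omegaOf_single _ _ _ i⟩⟩

lemma etaL_eq_of_etaEq {v : QPt A n} {L : LOr A n} (h : EtaEq A n v L.I L.ω) :
    etaL v = L := by
  obtain ⟨I, ω, surj⟩ := L
  obtain ⟨hI, hind⟩ := h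
  dsimp at hI hind
  subst hI
  have hω : omegaOf (IdealI A n v) v.1.2.1 (mem_idealI_f v) = ω := by
    apply LinearMap.pi_ext
    intro i x
    have hsx : (Pi.single i x : Fin n → A) = x • (Pi.single i 1 : Fin n → A) := by
      rw [← Pi.single_smul, smul_eq_mul, mul_one]
    rw [hsx, map_smul, map_smul, omegaOf_single]
    obtain ⟨h, he⟩ := hind i
    rw [he]
  subst hω
  rfl

lemma idealI_evalQ (t : A) (w : QPt (Polynomial A) n) :
    IdealI A n (evalQ A n t w) = (IdealI (Polynomial A) n w).map (Polynomial.evalRingHom t) := by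
  show Ideal.span _ = Ideal.map _ (Ideal.span _)
  rw [Ideal.map_span, Set.image_insert_eq, ← Set.range_comp]
  rfl

lemma loSpec_etaL (w : QPt (Polynomial A) n) (t : A) :
    LoSpec A n (etaL w) t (etaL (evalQ A n t w)) := by
  refine ⟨idealI_evalQ t w, fun j => ?_⟩
  exact ⟨w.1.2.1 j, mem_idealI_f w j, omegaOf_single _ _ _ j,
    mem_idealI_f (evalQ A n t w) j, omegaOf_single _ _ _ j⟩

lemma psi_descent (u u' : QPt A n) (h : QHomRel A n u u') :
    Quot.mk (LoRel A n) (etaL u) = Quot.mk (LoRel A n) (etaL u') := by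
  obtain ⟨H, h0, h1⟩ := h
  subst h0; subst h1
  exact Quot.sound ⟨etaL H, loSpec_etaL H 0, loSpec_etaL H 1⟩

/-- The map `π₀(Q) → π₀(LO)` induced by `η`. -/
def psiMap (A : Type*) [CommRing A] (n : ℕ) : Pi0Q A n → Pi0LO A n :=
  Quot.lift (fun v => Quot.mk (LoRel A n) (etaL v)) psi_descent

/-- Existence of a quadric point realizing a given local orientation. -/
lemma existsV [IsNoetherianRing A] (L : LOr A n) : ∃ v : QPt A n, EtaEq A n v L.I L.ω := by
  set I := L.I with hIdef
  have hsur : ∀ i : Fin n, ∃ x : I, I.toCotangent x = L.ω (Pi.single i 1) := fun i =>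
    I.toCotangent_surjective _
  choose x hx using hsur
  set f : Fin n → A := fun i => (x i : A) with hf
  set J := Ideal.span (Set.range f) with hJ
  have hJI : J ≤ I := by
    rw [Ideal.span_le]; rintro _ ⟨i, rfl⟩; exact (x i).2
  have hIJ : I ≤ J ⊔ I ^ 2 := by
    intro y hy
    obtain ⟨c, hc⟩ := L.surj (I.toCotangent ⟨y, hy⟩)
    have hdec : ∑ i, c i • (Pi.single i 1 : Fin n → A) = c := by
      have h1 : ∀ i, c i • (Pi.single i 1 : Fin n → A) = Pi.single i (c i) := by
        intro i; rw [← Pi.single_smul, smul_eq_mul, mul_one]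
      simp only [h1]
      exact Finset.univ_sum_single c
    have hωc : L.ω c = I.toCotangent (∑ i, c i • x i) := by
      conv_lhs => rw [← hdec]
      rw [map_sum, map_sum]
      exact Finset.sum_congr rfl fun i _ => by rw [map_smul, map_smul, hx]
    have hyq : I.toCotangent ⟨y, hy⟩ = I.toCotangent (∑ i, c i • x i) := by
      rw [← hc, hωc]
    rw [Ideal.toCotangent_eq] at hyq
    have hcoe : ((∑ i, c i • x i : I) : A) = ∑ i, c i * f i := by
      simp [hf]
    rw [hcoe] at hyq
    have hsplit : y = (∑ i, c i * f i) + (y - ∑ i, c i * f i) := by ring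
    rw [hsplit]
    refine Submodule.add_mem _ (Ideal.mem_sup_left ?_) (Ideal.mem_sup_right hyq)
    exact Ideal.sum_mem J fun i _ => J.mul_mem_left _ (Ideal.subset_span ⟨i, rfl⟩)
  obtain ⟨e, heI, heJ, hkey, hIeq⟩ := key_nak I J (IsNoetherian.noetherian I) hJI hIJ
  obtain ⟨gneg, hg⟩ := (Submodule.mem_span_range_iff_exists_fun A).mp heJ
  simp only [smul_eq_mul] at hg
  set g : Fin n → A := fun i => -gneg i with hgdef
  have hQ : IsQPt A n (e, f, g) := by
    show (∑ i, f i * g i) + e * (e - 1) = 0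
    have : ∑ i, f i * g i = -(e * (e - 1)) := by
      rw [← hg, ← Finset.sum_neg_distrib]
      exact Finset.sum_congr rfl fun i _ => by simp [hgdef]; ring
    rw [this]; ring
  refine ⟨⟨(e, f, g), hQ⟩, ?_, ?_⟩
  · show Ideal.span (insert e (Set.range f)) = I
    rw [Ideal.span_insert, sup_comm, ← hJ, ← hIeq]
  · intro i
    exact ⟨(x i).2, (hx i).symm⟩

/-- Moving the `s`-coordinate by an element of `(f₁,…,fₙ)` (and changing `g` freely)
preserves the homotopy class. -/
lemma zeta0_move {s s₂ : A} {f g g₂ : Fin n → A} (hu : IsQPt A n (s, f, g))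
    (hw : IsQPt A n (s₂, f, g₂)) (hs : s₂ - s ∈ Ideal.span (Set.range f)) :
    zeta0 A n ⟨(s, f, g), hu⟩ = zeta0 A n ⟨(s₂, f, g₂), hw⟩ := by
  obtain ⟨c, hc⟩ := (Submodule.mem_span_range_iff_exists_fun A).mp hs
  simp only [smul_eq_mul] at hc
  set S : Polynomial A := C s + X * (C s₂ - C s) with hS
  set K : Polynomial A := (X - X ^ 2) * (C s₂ - C s) with hK
  set F : Fin n → Polynomial A := fun i => C (f i) with hF
  set G : Fin n → Polynomial A := fun i => C (g i) * (1 - X) + C (g₂ i) * X + K * C (c i)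
    with hG
  have hu' : IsQPt A n (s, f, g) := hu
  have hw' : IsQPt A n (s₂, f, g₂) := hw
  simp only [IsQPt] at hu' hw'
  have hCu := congrArg C hu'
  have hCw := congrArg C hw'
  simp only [map_add, map_mul, map_sub, map_one, map_zero, map_sum] at hCu hCw
  have hQ : IsQPt (Polynomial A) n (S, F, G) := by
    show (∑ i, F i * G i) + S * (S - 1) = 0
    have h1 : ∀ i ∈ Finset.univ, F i * G i
        = (C (f i) * C (g i)) * (1 - X) + (C (f i) * C (g₂ i)) * X + K * (C (c i) * C (f i)) := by
      intro i _
      simp only [hF, hG]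
      ring
    have h3 : (∑ i, C (c i) * C (f i) : Polynomial A) = C s₂ - C s := by
      have h4 : ∀ i ∈ Finset.univ, (C (c i) * C (f i) : Polynomial A) = C (c i * f i) :=
        fun i _ => (map_mul C _ _).symm
      rw [Finset.sum_congr rfl h4, ← map_sum, hc, map_sub]
    rw [Finset.sum_congr rfl h1, Finset.sum_add_distrib, Finset.sum_add_distrib,
      ← Finset.sum_mul, ← Finset.sum_mul, ← Finset.mul_sum, h3]
    simp only [hS, hK]
    linear_combination (1 - X) * hCu + X * hCw
  have hfev : ∀ t : A, (fun i => (F i).eval t) = f := by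
    intro t; funext i; simp [hF]
  have h0 : evalQ A n 0 ⟨(S, F, G), hQ⟩ = ⟨(s, f, g), hu⟩ := by
    apply Subtype.ext
    show (S.eval 0, fun i => (F i).eval 0, fun i => (G i).eval 0) = (s, f, g)
    rw [hfev 0]
    have hs0 : S.eval 0 = s := by simp [hS]
    have hg0 : (fun i => (G i).eval 0) = g := by funext i; simp [hG, hK]
    rw [hs0, hg0]
  have h1 : evalQ A n 1 ⟨(S, F, G), hQ⟩ = ⟨(s₂, f, g₂), hw⟩ := by
    apply Subtype.ext
    show (S.eval 1, fun i => (F i).eval 1, fun i => (G i).eval 1) = (s₂, f, g₂)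
    rw [hfev 1]
    have hs1 : S.eval 1 = s₂ := by simp [hS]
    have hg1 : (fun i => (G i).eval 1) = g₂ := by funext i; simp [hG, hK]
    rw [hs1, hg1]
  exact Quot.sound ⟨⟨(S, F, G), hQ⟩, h0, h1⟩

set_option maxHeartbeats 1000000 in
/-- Well-definedness: two quadric points inducing the same local orientation are
homotopy equivalent. -/
lemma zeta_welldef [IsNoetherianRing A] {I : Ideal A} {ω : (Fin n → A) →ₗ[A] I.Cotangent}
    (u v : QPt A n) (hu : EtaEq A n u I ω) (hv : EtaEq A n v I ω) :
    zeta0 A n u = zeta0 A n v := by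
  classical
  obtain ⟨⟨s, f, g⟩, hq⟩ := u
  obtain ⟨⟨s', f', g'⟩, hq'⟩ := v
  obtain ⟨hI, hind⟩ := hu
  obtain ⟨hI', hind'⟩ := hv
  have hIeq : Ideal.span (insert s (Set.range f)) = I := hI
  have hIeq' : Ideal.span (insert s' (Set.range f')) = I := hI'
  have hq0 : (∑ i, f i * g i) + s * (s - 1) = 0 := hq
  have hq0' : (∑ i, f' i * g' i) + s' * (s' - 1) = 0 := hq'
  have hfI : ∀ i, f i ∈ I := fun i => (hind i).choose
  have hsI : s ∈ I := by rw [← hIeq]; exact Ideal.subset_span (Set.mem_insert _ _)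
  have hε : ∀ i, f' i - f i ∈ I ^ 2 := by
    intro i
    obtain ⟨h1, he1⟩ := hind i
    obtain ⟨h2, he2⟩ := hind' i
    have h3 := he1.symm.trans he2
    rw [Ideal.toCotangent_eq] at h3
    have h4 := (I ^ 2).neg_mem h3
    simpa [neg_sub] using h4
  set ε : Fin n → A := fun i => f' i - f i with hεdef
  set Fp : Fin n → Polynomial A := fun i => C (f i) + X * C (ε i) with hFp
  set Jp : Ideal (Polynomial A) := Ideal.span (Set.range Fp) with hJp
  set Ip : Ideal (Polynomial A) := I.map C with hIp
  have hmemCε : ∀ i, (C (ε i) : Polynomial A) ∈ Ip ^ 2 := fun i => by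
    rw [hIp, ← Ideal.map_pow]
    exact Ideal.mem_map_of_mem C (hε i)
  have hJIp : Jp ≤ Ip := by
    rw [hJp, Ideal.span_le]
    rintro _ ⟨i, rfl⟩
    refine Ideal.add_mem _ (Ideal.mem_map_of_mem C (hfI i)) ?_
    exact Ip.mul_mem_left X ((Ideal.pow_le_self two_ne_zero) (hmemCε i))
  have hfmemJ : ∀ i, (C (f i) : Polynomial A) ∈ Jp ⊔ Ip ^ 2 := by
    intro i
    have h1 : (C (f i) : Polynomial A) = Fp i - X * C (ε i) := by simp [hFp]
    rw [h1]
    refine Submodule.sub_mem _ (Ideal.mem_sup_left (Ideal.subset_span ⟨i, rfl⟩)) ?_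
    exact Ideal.mem_sup_right ((Ip ^ 2).mul_mem_left X (hmemCε i))
  have hIJp : Ip ≤ Jp ⊔ Ip ^ 2 := by
    have hIp2 : Ip = Ideal.map C (Ideal.span (insert s (Set.range f))) := by rw [hIp, hIeq]
    conv_lhs => rw [hIp2]
    rw [Ideal.map_span, Ideal.span_le]
    rintro _ ⟨y, hy, rfl⟩
    rcases Set.mem_insert_iff.mp hy with h | ⟨i, rfl⟩
    · subst h
      have hsrep : (C y : Polynomial A) = C y * C y + ∑ i, C (f i) * C (g i) := by
        have h5 : y = y * y + ∑ i, f i * g i := by linear_combination -hq0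
        calc (C y : Polynomial A) = C (y * y + ∑ i, f i * g i) := by rw [← h5]
          _ = C y * C y + ∑ i, C (f i) * C (g i) := by
              rw [map_add, map_mul, map_sum]
              simp only [map_mul]
      rw [hsrep]
      refine Submodule.add_mem _ (Ideal.mem_sup_right ?_) (Ideal.sum_mem _ fun i _ => ?_)
      · rw [pow_two]
        exact Ideal.mul_mem_mul (Ideal.mem_map_of_mem C hsI) (Ideal.mem_map_of_mem C hsI)
      · exact Ideal.mul_mem_right _ _ (hfmemJ i)
    · exact hfmemJ i
  have hFGIp : Ip.FG := Ideal.FG.map (IsNoetherian.noetherian I) C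
  obtain ⟨E, hEIp, hEJ, hEkey, hIpEq⟩ := key_nak Ip Jp hFGIp hJIp hIJp
  obtain ⟨Gm, hGm⟩ := (Submodule.mem_span_range_iff_exists_fun (Polynomial A)).mp hEJ
  simp only [smul_eq_mul] at hGm
  set Gp : Fin n → Polynomial A := fun i => -Gm i with hGp
  have hQW : IsQPt (Polynomial A) n (E, Fp, Gp) := by
    show (∑ i, Fp i * Gp i) + E * (E - 1) = 0
    have h5 : ∀ i ∈ Finset.univ, Fp i * Gp i = -(Gm i * Fp i) := fun i _ => by
      simp only [hGp]; ring
    rw [Finset.sum_congr rfl h5, Finset.sum_neg_distrib, hGm]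
    ring
  set W : QPt (Polynomial A) n := ⟨(E, Fp, Gp), hQW⟩ with hW
  have hcomp : ∀ t : A, (Polynomial.evalRingHom t).comp C = RingHom.id A := by
    intro t; ext a; simp
  have hIpev : ∀ t : A, Ip.map (Polynomial.evalRingHom t) = I := by
    intro t; rw [hIp, Ideal.map_map, hcomp, Ideal.map_id]
  have hJpev : ∀ t : A, Jp.map (Polynomial.evalRingHom t)
      = Ideal.span (Set.range fun i => f i + t * ε i) := by
    intro t
    rw [hJp, Ideal.map_span, ← Set.range_comp]
    have h7 : ⇑(Polynomial.evalRingHom t) ∘ Fp = fun i => f i + t * ε i := by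
      funext i; simp [hFp]; ring
    rw [h7]
  have hEev : ∀ t : A, (Ideal.span {E}).map (Polynomial.evalRingHom t)
      = Ideal.span {E.eval t} := by
    intro t
    rw [Ideal.map_span, Set.image_singleton]
    simp
  have hsupEv : ∀ t : A, I = Ideal.span (Set.range fun i => f i + t * ε i)
      ⊔ Ideal.span {E.eval t} := by
    intro t
    conv_lhs => rw [← hIpev t]
    rw [hIpEq, Ideal.map_sup, hJpev, hEev]
  have hEJev : ∀ t : A, E.eval t * (E.eval t - 1)
      ∈ Ideal.span (Set.range fun i => f i + t * ε i) := by
    intro t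
    have h6 := Ideal.mem_map_of_mem (Polynomial.evalRingHom t) hEJ
    rw [hJpev] at h6
    simpa using h6
  have hr0 : (Set.range fun i => f i + (0:A) * ε i) = Set.range f := by
    have h7 : (fun i => f i + (0:A) * ε i) = f := by funext i; ring
    rw [h7]
  have hr1 : (Set.range fun i => f i + (1:A) * ε i) = Set.range f' := by
    have h7 : (fun i => f i + (1:A) * ε i) = f' := by funext i; simp [hεdef]
    rw [h7]
  have hs0 : s * (s - 1) ∈ Ideal.span (Set.range f) := by
    refine (Submodule.mem_span_range_iff_exists_fun A).mpr ⟨fun i => -g i, ?_⟩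
    simp only [smul_eq_mul]
    have h8 : ∀ i ∈ Finset.univ, -g i * f i = -(f i * g i) := fun i _ => by ring
    rw [Finset.sum_congr rfl h8, Finset.sum_neg_distrib]
    linear_combination -hq0
  have hs1 : s' * (s' - 1) ∈ Ideal.span (Set.range f') := by
    refine (Submodule.mem_span_range_iff_exists_fun A).mpr ⟨fun i => -g' i, ?_⟩
    simp only [smul_eq_mul]
    have h8 : ∀ i ∈ Finset.univ, -g' i * f' i = -(f' i * g' i) := fun i _ => by ring
    rw [Finset.sum_congr rfl h8, Finset.sum_neg_distrib]
    linear_combination -hq0'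
  have hIs : I = Ideal.span (Set.range f) ⊔ Ideal.span {s} := by
    rw [← hIeq, Ideal.span_insert, sup_comm]
  have hIs' : I = Ideal.span (Set.range f') ⊔ Ideal.span {s'} := by
    rw [← hIeq', Ideal.span_insert, sup_comm]
  have hE0s : E.eval 0 - s ∈ Ideal.span (Set.range f) := by
    refine idem_unique _ (E.eval 0) s ?_ hs0 ?_
    · have h9 := hEJev 0; rwa [hr0] at h9
    · have h9 := hsupEv 0
      rw [hr0] at h9
      rw [← h9, ← hIs]
  have hE1s : E.eval 1 - s' ∈ Ideal.span (Set.range f') := by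
    refine idem_unique _ (E.eval 1) s' ?_ hs1 ?_
    · have h9 := hEJev 1; rwa [hr1] at h9
    · have h9 := hsupEv 1
      rw [hr1] at h9
      rw [← h9, ← hIs']
  have hfev0 : (fun i => (Fp i).eval 0) = f := by funext i; simp [hFp]
  have hfev1 : (fun i => (Fp i).eval 1) = f' := by funext i; simp [hFp, hεdef]
  have hQ0 : IsQPt A n (E.eval 0, f, fun i => (Gp i).eval 0) := by
    have h7 : IsQPt A n (E.eval 0, fun i => (Fp i).eval 0, fun i => (Gp i).eval 0) :=
      (evalQ A n 0 W).2
    rwa [hfev0] at h7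
  have hQ1 : IsQPt A n (E.eval 1, f', fun i => (Gp i).eval 1) := by
    have h7 : IsQPt A n (E.eval 1, fun i => (Fp i).eval 1, fun i => (Gp i).eval 1) :=
      (evalQ A n 1 W).2
    rwa [hfev1] at h7
  have hW0 : evalQ A n 0 W = ⟨(E.eval 0, f, fun i => (Gp i).eval 0), hQ0⟩ := by
    apply Subtype.ext
    show (E.eval 0, fun i => (Fp i).eval 0, fun i => (Gp i).eval 0) = _
    rw [hfev0]
  have hW1 : evalQ A n 1 W = ⟨(E.eval 1, f', fun i => (Gp i).eval 1), hQ1⟩ := by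
    apply Subtype.ext
    show (E.eval 1, fun i => (Fp i).eval 1, fun i => (Gp i).eval 1) = _
    rw [hfev1]
  calc zeta0 A n ⟨(s, f, g), hq⟩
      = zeta0 A n ⟨(E.eval 0, f, fun i => (Gp i).eval 0), hQ0⟩ := zeta0_move hq hQ0 hE0s
    _ = zeta0 A n (evalQ A n 0 W) := by rw [hW0]
    _ = zeta0 A n (evalQ A n 1 W) := Quot.sound ⟨W, rfl, rfl⟩
    _ = zeta0 A n ⟨(E.eval 1, f', fun i => (Gp i).eval 1), hQ1⟩ := by rw [hW1]
    _ = zeta0 A n ⟨(s', f', g'), hq'⟩ := by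
        refine zeta0_move hQ1 hq' ?_
        have h9 := (Ideal.span (Set.range f')).neg_mem hE1s
        simpa [neg_sub] using h9

variable [IsNoetherianRing A]

/-- A choice of quadric point realizing a local orientation. -/
noncomputable def thetaL (L : LOr A n) : QPt A n := (existsV L).choose

lemma thetaL_spec (L : LOr A n) : EtaEq A n (thetaL L) L.I L.ω := (existsV L).choose_spec

lemma eta_evalQ_of_loSpec {H : LOr (Polynomial A) n} {w : QPt (Polynomial A) n}
    (hw : EtaEq (Polynomial A) n w H.I H.ω) {t : A} {L : LOr A n}
    (hsp : LoSpec A n H t L) : EtaEq A n (evalQ A n t w) L.I L.ω := by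
  obtain ⟨hLI, hLω⟩ := hsp
  obtain ⟨hwI, hwind⟩ := hw
  constructor
  · rw [idealI_evalQ, hwI, hLI]
  · intro j
    obtain ⟨F, hF, hHω, hFev, hLωj⟩ := hLω j
    obtain ⟨hwfj, hwωj⟩ := hwind j
    have hFw : F - w.1.2.1 j ∈ H.I ^ 2 := by
      have h0 := hHω.symm.trans hwωj
      rw [Ideal.toCotangent_eq] at h0
      exact h0
    have hwmem : w.1.2.1 j ∈ H.I := hwfj
    have h1 : (w.1.2.1 j).eval t ∈ L.I := by
      rw [hLI]
      simpa using Ideal.mem_map_of_mem (Polynomial.evalRingHom t) hwmem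
    refine ⟨h1, ?_⟩
    rw [hLωj]
    apply (Ideal.toCotangent_eq L.I).mpr
    show F.eval t - (w.1.2.1 j).eval t ∈ L.I ^ 2
    have h2 := Ideal.mem_map_of_mem (Polynomial.evalRingHom t) hFw
    rw [Ideal.map_pow] at h2
    have h3 : (Polynomial.evalRingHom t) (F - w.1.2.1 j) = F.eval t - (w.1.2.1 j).eval t := by
      simp
    rw [h3] at h2
    rwa [hLI]

lemma theta_descent (L₀ L₁ : LOr A n) (h : LoRel A n L₀ L₁) :
    zeta0 A n (thetaL L₀) = zeta0 A n (thetaL L₁) := by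
  obtain ⟨H, h0, h1⟩ := h
  obtain ⟨w, hw⟩ := existsV (A := Polynomial A) H
  calc zeta0 A n (thetaL L₀)
      = zeta0 A n (evalQ A n 0 w) :=
        zeta_welldef _ _ (thetaL_spec L₀) (eta_evalQ_of_loSpec hw h0)
    _ = zeta0 A n (evalQ A n 1 w) := Quot.sound ⟨w, rfl, rfl⟩
    _ = zeta0 A n (thetaL L₁) :=
        zeta_welldef _ _ (eta_evalQ_of_loSpec hw h1) (thetaL_spec L₁)

/-- The map `π₀(LO) → π₀(Q)` induced by `ζ`. -/
noncomputable def thetaMap (A : Type*) [CommRing A] [IsNoetherianRing A] (n : ℕ) :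
    Pi0LO A n → Pi0Q A n :=
  Quot.lift (fun L => zeta0 A n (thetaL L)) theta_descent

end Aux

/-- For a commutative noetherian ring `A` and `n ≥ 2`, the map
`ζ : LO(A,n) → π₀(Q_{2n})(A)` descends to a bijection
`π₀(LO(A,n)) ≃ π₀(Q_{2n})(A)`, whose inverse is induced by `η`. -/
theorem pi0LO_equiv_pi0Q (A : Type*) [CommRing A] [IsNoetherianRing A]
    (n : ℕ) (hn : 2 ≤ n) :
    ∃ φ : Pi0LO A n ≃ Pi0Q A n,
      (∀ (L : LOr A n) (v : QPt A n), EtaEq A n v L.I L.ω →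
        φ (Quot.mk (LoRel A n) L) = zeta0 A n v) ∧
      (∀ (L : LOr A n) (v : QPt A n), EtaEq A n v L.I L.ω →
        φ.symm (zeta0 A n v) = Quot.mk (LoRel A n) L) := by
  refine ⟨⟨thetaMap A n, psiMap A n, ?_, ?_⟩, ?_, ?_⟩
  · refine Quot.ind ?_
    intro L
    show psiMap A n (zeta0 A n (thetaL L)) = Quot.mk (LoRel A n) L
    show Quot.mk (LoRel A n) (etaL (thetaL L)) = Quot.mk (LoRel A n) L
    rw [etaL_eq_of_etaEq (thetaL_spec L)]
  · refine Quot.ind ?_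
    intro v
    show thetaMap A n (Quot.mk (LoRel A n) (etaL v)) = zeta0 A n v
    show zeta0 A n (thetaL (etaL v)) = zeta0 A n v
    exact zeta_welldef _ _ (thetaL_spec (etaL v)) (etaEq_etaL v)
  · intro L v hEta
    show zeta0 A n (thetaL L) = zeta0 A n v
    exact zeta_welldef _ _ (thetaL_spec L) hEta
  · intro L v hEta
    show psiMap A n (zeta0 A n v) = Quot.mk (LoRel A n) L
    show Quot.mk (LoRel A n) (etaL v) = Quot.mk (LoRel A n) L
    rw [etaL_eq_of_etaEq hEta]
end

section
/- (Moving Lemma) Suppose A is a commutative noetherian ring with dim A = d and n ≥ 2 is an integer such that 2n ≥ d + 1. Let K ⊆ A be an ideal with height(K) ≥ n and let (I, ω_I) ∈ LO(A,n). Then there exists v = (s; f_1,…,f_n; g_1,…,g_n) ∈ Q_{2n}(A) such that η(v) = (I, ω_I) and, with J := 𝕁(v), one has height(J) ≥ n and J + K = A. -/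
open Polynomial

section Core
variable (A : Type*) [CommRing A] (n : ℕ)

/-- A (commutative noetherian) ring is regular if all its localizations at primes are
regular local rings. -/
def IsRegularRingAux (R : Type*) [CommRing R] : Prop :=
  IsNoetherianRing R ∧
    ∀ (P : Ideal R) (_ : P.IsPrime), IsRegularLocal (Localization.AtPrime P)

end Core

section MLAux
variable {A : Type*} [CommRing A]

lemma ml_avoid_antichain (J : Ideal A) (s : Finset (Ideal A))
    (hp : ∀ P ∈ s, P.IsPrime) (hJ : ∀ P ∈ s, ¬ J ≤ P)
    (hanti : ∀ P ∈ s, ∀ Q ∈ s, P ≤ Q → P = Q) (a : A) :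
    ∃ j ∈ J, ∀ P ∈ s, a + j ∉ P := by
  classical
  induction s using Finset.cons_induction with
  | empty => exact ⟨0, J.zero_mem, by simp⟩
  | cons P s hPs ih =>
    obtain ⟨j, hjJ, hj⟩ := ih (fun Q hQ => hp Q (Finset.mem_cons_of_mem hQ))
      (fun Q hQ => hJ Q (Finset.mem_cons_of_mem hQ))
      (fun Q hQ R hR h => hanti Q (Finset.mem_cons_of_mem hQ) R (Finset.mem_cons_of_mem hR) h)
    have hP : P.IsPrime := hp P (Finset.mem_cons_self ..)
    by_cases hmem : a + j ∈ P
    · have hnle : ¬ (J ⊓ s.inf id ≤ P) := by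
        rw [hP.inf_le]
        rintro (h | h)
        · exact hJ P (Finset.mem_cons_self ..) h
        · rw [hP.inf_le'] at h
          obtain ⟨Q, hQ, hQP⟩ := h
          exact hPs (hanti Q (Finset.mem_cons_of_mem hQ) P (Finset.mem_cons_self ..) hQP ▸ hQ)
      obtain ⟨δ, hδ, hδP⟩ := SetLike.not_le_iff_exists.mp hnle
      obtain ⟨hδJ, hδinf⟩ := Submodule.mem_inf.mp hδ
      refine ⟨j + δ, J.add_mem hjJ hδJ, ?_⟩
      intro Q hQ
      rcases Finset.mem_cons.mp hQ with rfl | hQ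
      · intro h
        have h2 := Q.sub_mem h hmem
        rw [show a + (j + δ) - (a + j) = δ by ring] at h2
        exact hδP h2
      · intro h
        have hδQ : δ ∈ Q := (Finset.inf_le hQ : s.inf id ≤ Q) hδinf
        have h2 := Q.sub_mem h hδQ
        rw [show a + (j + δ) - δ = a + j by ring] at h2
        exact hj Q hQ h2
    · refine ⟨j, hjJ, fun Q hQ => ?_⟩
      rcases Finset.mem_cons.mp hQ with rfl | hQ
      · exact hmem
      · exact hj Q hQ

lemma ml_avoid_primes (J : Ideal A) (s : Set (Ideal A)) (hs : s.Finite)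
    (hp : ∀ P ∈ s, P.IsPrime) (hJ : ∀ P ∈ s, ¬ J ≤ P) (a : A) :
    ∃ j ∈ J, ∀ P ∈ s, a + j ∉ P := by
  classical
  set T : Finset (Ideal A) := hs.toFinset with hTdef
  have hT : ∀ P, P ∈ T ↔ P ∈ s := fun P => hs.mem_toFinset
  set M : Finset (Ideal A) := T.filter (fun P => ∀ Q ∈ T, P ≤ Q → P = Q) with hMdef
  obtain ⟨j, hjJ, hj⟩ := ml_avoid_antichain J M
    (fun P hP => hp P ((hT P).mp (Finset.mem_filter.mp hP).1))
    (fun P hP => hJ P ((hT P).mp (Finset.mem_filter.mp hP).1))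
    (fun P hP Q hQ h => (Finset.mem_filter.mp hP).2 Q (Finset.mem_filter.mp hQ).1 h) a
  refine ⟨j, hjJ, fun P hPs hmem => ?_⟩
  have hPT : P ∈ T := (hT P).mpr hPs
  obtain ⟨Q, hQM'⟩ := Finset.exists_maximal (s := T.filter (fun Q => P ≤ Q))
    ⟨P, Finset.mem_filter.mpr ⟨hPT, le_rfl⟩⟩
  have hQU := hQM'.prop
  have hQmax : ∀ R ∈ T.filter (fun Q => P ≤ Q), ¬ Q < R :=
    fun R hR hlt => absurd (hQM'.2 hR hlt.le) (not_le_of_gt hlt)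
  obtain ⟨hQT, hPQ⟩ := Finset.mem_filter.mp hQU
  have hQM : Q ∈ M := by
    refine Finset.mem_filter.mpr ⟨hQT, fun R hRT hQR => ?_⟩
    by_contra hne
    exact hQmax R (Finset.mem_filter.mpr ⟨hRT, hPQ.trans hQR⟩) (lt_of_le_of_ne hQR hne)
  exact hj Q hQM (hPQ hmem)

lemma ml_minPrimes_finite [IsNoetherianRing A] (L : Ideal A) : L.minimalPrimes.Finite := by
  rw [Ideal.minimalPrimes_eq_comap]
  exact (minimalPrimes.finite_of_isNoetherianRing _).image _

lemma ml_height_succ_le {P Q : Ideal A} (hP : P.IsPrime) (hQ : Q.IsPrime) (h : P < Q) :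
    Order.height (⟨P, hP⟩ : PrimeSpectrum A) + 1 ≤ Order.height (⟨Q, hQ⟩ : PrimeSpectrum A) := by
  rw [Order.height_eq_iSup_lt_height (⟨Q, hQ⟩ : PrimeSpectrum A)]
  exact le_iSup₂ (f := fun (y : PrimeSpectrum A) (_ : y < ⟨Q, hQ⟩) => Order.height y + 1)
    (⟨P, hP⟩ : PrimeSpectrum A) ((PrimeSpectrum.asIdeal_lt_asIdeal _ _).mp h)

lemma ml_core [IsNoetherianRing A] (n : ℕ) (I K : Ideal A)
    (hK : HeightGE A K n) (f : Fin n → A) (t : ℕ) (htn : t ≤ n) :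
    ∃ F : Fin n → A, (∀ i, F i - f i ∈ I ^ 2) ∧ (∀ i : Fin n, t ≤ i.1 → F i = f i) ∧
      (∀ (P : Ideal A) (hP : P.IsPrime),
        P ∈ (Ideal.span (F '' {i : Fin n | i.1 < t})).minimalPrimes → ¬ I ≤ P →
        (t : ℕ∞) ≤ Order.height (⟨P, hP⟩ : PrimeSpectrum A)) ∧
      (∀ (P : Ideal A) (hP : P.IsPrime),
        P ∈ (Ideal.span (F '' {i : Fin n | i.1 < t}) ⊔ K).minimalPrimes → ¬ I ≤ P →
        ((n + t : ℕ) : ℕ∞) ≤ Order.height (⟨P, hP⟩ : PrimeSpectrum A)) := by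
  classical
  induction t with
  | zero =>
    have hempty : {i : Fin n | i.1 < 0} = (∅ : Set (Fin n)) := by ext i; simp
    refine ⟨f, fun i => by simp, fun i _ => rfl, ?_, ?_⟩
    · intro P hP _ _; simp
    · intro P hP hmem _
      rw [hempty, Set.image_empty, Ideal.span_empty, bot_sup_eq] at hmem
      simpa using hK P hP hmem.1.2
  | succ t ih =>
    obtain ⟨F, hFf, hFu, ha, hb⟩ := ih (Nat.le_of_succ_le htn)
    have htn' : t < n := htn
    set t' : Fin n := ⟨t, htn'⟩ with ht'
    set L : Ideal A := Ideal.span (F '' {i : Fin n | i.1 < t}) with hL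
    set S : Set (Ideal A) :=
      {P | (P ∈ L.minimalPrimes ∨ P ∈ (L ⊔ K).minimalPrimes) ∧ ¬ I ≤ P} with hS
    have hSfin : S.Finite := by
      apply ((ml_minPrimes_finite L).union (ml_minPrimes_finite (L ⊔ K))).subset
      rintro P ⟨h | h, -⟩
      · exact Or.inl h
      · exact Or.inr h
    have hSp : ∀ P ∈ S, P.IsPrime := by
      rintro P ⟨h | h, -⟩
      · exact h.1.1
      · exact h.1.1
    have hSJ : ∀ P ∈ S, ¬ (I ^ 2 ≤ P) := by
      rintro P hPS h
      have hP := hSp P hPS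
      rw [pow_two, hP.mul_le] at h
      exact hPS.2 (h.elim id id)
    obtain ⟨j, hjI, hjav⟩ := ml_avoid_primes (I ^ 2) S hSfin hSp hSJ (f t')
    set b : A := f t' + j with hb'
    set F' : Fin n → A := Function.update F t' b with hF'
    have hF'eq : ∀ i : Fin n, i.1 < t → F' i = F i := by
      intro i hi
      exact Function.update_of_ne (by simp [ht', Fin.ext_iff]; omega) _ _
    have himg : F' '' {i : Fin n | i.1 < t + 1} = insert b (F '' {i : Fin n | i.1 < t}) := by
      have hset : {i : Fin n | i.1 < t + 1} = insert t' {i : Fin n | i.1 < t} := by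
        ext i
        simp only [Set.mem_setOf_eq, Set.mem_insert_iff, Fin.ext_iff, Fin.val_mk]
        have : (t' : ℕ) = t := rfl
        omega
      rw [hset, Set.image_insert_eq]
      congr 1
      · exact Function.update_self _ _ _
      · exact Set.image_congr fun i hi => hF'eq i hi
    have hspan : Ideal.span (F' '' {i : Fin n | i.1 < t + 1}) = Ideal.span {b} ⊔ L := by
      rw [himg, Ideal.span_insert]
    -- key step facts
    have key : ∀ (P : Ideal A), P.IsPrime → ¬ I ≤ P →
        b ∈ P → ∀ (P₀ : Ideal A), P₀ ∈ S → P₀ ≤ P → P₀ < P := by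
      intro P hP hIP hbP P₀ hP₀S hle
      refine lt_of_le_of_ne hle (fun h => ?_)
      exact hjav P₀ hP₀S (h ▸ hbP)
    refine ⟨F', ?_, ?_, ?_, ?_⟩
    · intro i
      by_cases hi : i = t'
      · subst hi
        rw [hF', Function.update_self]
        have : b - f t' = j := by rw [hb']; ring
        rw [this]; exact hjI
      · rw [hF', Function.update_of_ne hi]; exact hFf i
    · intro i hi
      have hne : i ≠ t' := by simp [ht', Fin.ext_iff]; omega
      rw [hF', Function.update_of_ne hne]
      exact hFu i (by omega)
    · intro P hP hmem hIP
      rw [hspan] at hmem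
      have hLP : L ≤ P := le_trans le_sup_right hmem.1.2
      obtain ⟨P₀, hP₀m, hP₀le⟩ := Ideal.exists_minimalPrimes_le (J := P) hLP
      have hP₀p : P₀.IsPrime := hP₀m.1.1
      have hIP₀ : ¬ I ≤ P₀ := fun h => hIP (h.trans hP₀le)
      have hP₀S : P₀ ∈ S := ⟨Or.inl hP₀m, hIP₀⟩
      have hbP : b ∈ P := (le_trans le_sup_left hmem.1.2)
        (Ideal.mem_span_singleton_self b)
      have hlt := key P hP hIP hbP P₀ hP₀S hP₀le
      have h1 := ha P₀ hP₀p hP₀m hIP₀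
      have h2 := ml_height_succ_le hP₀p hP hlt
      push_cast
      calc (t : ℕ∞) + 1 ≤ Order.height (⟨P₀, hP₀p⟩ : PrimeSpectrum A) + 1 := by
            exact add_le_add_left h1 1
        _ ≤ _ := h2
    · intro P hP hmem hIP
      rw [hspan] at hmem
      have hLKP : L ⊔ K ≤ P := by
        have := hmem.1.2
        rw [sup_assoc] at this
        exact le_trans le_sup_right this
      obtain ⟨P₀, hP₀m, hP₀le⟩ := Ideal.exists_minimalPrimes_le (J := P) hLKP
      have hP₀p : P₀.IsPrime := hP₀m.1.1
      have hIP₀ : ¬ I ≤ P₀ := fun h => hIP (h.trans hP₀le)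
      have hP₀S : P₀ ∈ S := ⟨Or.inr hP₀m, hIP₀⟩
      have hbP : b ∈ P := (le_trans (le_trans le_sup_left le_sup_left) hmem.1.2)
        (Ideal.mem_span_singleton_self b)
      have hlt := key P hP hIP hbP P₀ hP₀S hP₀le
      have h1 := hb P₀ hP₀p hP₀m hIP₀
      have h2 := ml_height_succ_le hP₀p hP hlt
      push_cast
      push_cast at h1
      calc ((n : ℕ∞) + t) + 1
            ≤ Order.height (⟨P₀, hP₀p⟩ : PrimeSpectrum A) + 1 := add_le_add_left h1 1
        _ ≤ _ := h2

end MLAux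

/-- **Moving Lemma.** Let `A` be commutative noetherian of dimension `d`,
`n ≥ 2`, `2n ≥ d + 1`. Given an ideal `K` with `height K ≥ n` and a local `n`-orientation
`(I, ω_I)`, there is `v ∈ Q_{2n}(A)` with `η(v) = (I, ω_I)`, `height 𝕁(v) ≥ n` and
`𝕁(v) + K = A`. -/

theorem moving_lemma (A : Type*) [CommRing A] [IsNoetherianRing A]
    (d n : ℕ) (hdim : ringKrullDim A = d) (hn : 2 ≤ n) (hnd : d + 1 ≤ 2 * n)
    (K : Ideal A) (hK : HeightGE A K n)
    (I : Ideal A) (ωI : (Fin n → A) →ₗ[A] I.Cotangent) (hωI : Function.Surjective ωI) :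
    ∃ v : QPt A n, EtaEq A n v I ωI ∧ HeightGE A (IdealJ A n v) n ∧
      IdealJ A n v ⊔ K = ⊤ := by
  classical
  -- Step A: lift ω to elements f i ∈ I
  obtain ⟨x, hx⟩ := Classical.axiomOfChoice
    (fun i : Fin n => I.toCotangent_surjective (ωI (Pi.single i 1)))
  set f : Fin n → A := fun i => (x i : A) with hfdef
  have hfI : ∀ i, f i ∈ I := fun i => (x i).2
  have hfω : ∀ i, ωI (Pi.single i 1) = I.toCotangent ⟨f i, hfI i⟩ := by
    intro i
    rw [← hx i]
  -- I ≤ span (range f) ⊔ I^2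
  have hIle : I ≤ Ideal.span (Set.range f) ⊔ I ^ 2 := by
    intro z hz
    obtain ⟨c, hc⟩ := hωI (I.toCotangent ⟨z, hz⟩)
    set y : I := ∑ i, c i • (⟨f i, hfI i⟩ : I) with hy
    have hcy : ωI c = I.toCotangent y := by
      have hcrepr : c = ∑ i, c i • (Pi.single i 1 : Fin n → A) := by
        funext j
        simp [Finset.sum_apply, Pi.single_apply, Finset.sum_ite_eq', mul_comm]
      calc ωI c = ∑ i, c i • ωI (Pi.single i 1) := by
            conv_lhs => rw [hcrepr]
            rw [map_sum]
            exact Finset.sum_congr rfl fun i _ => by rw [map_smul]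
        _ = I.toCotangent y := by
            rw [hy, map_sum]
            exact Finset.sum_congr rfl fun i _ => by rw [hfω i, map_smul]
    have hdiff : z - (y : A) ∈ I ^ 2 := by
      rw [← Ideal.toCotangent_eq (x := ⟨z, hz⟩) (y := y)]
      rw [← hc, hcy]
    have hyspan : (y : A) ∈ Ideal.span (Set.range f) := by
      rw [hy]
      simp only [AddSubmonoidClass.coe_finset_sum, SetLike.val_smul, smul_eq_mul]
      exact Ideal.sum_mem _ fun i _ =>
        Ideal.mul_mem_left _ _ (Ideal.subset_span (Set.mem_range_self i))
    have : z = (y : A) + (z - (y : A)) := by ring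
    rw [this]
    exact Submodule.add_mem_sup hyspan hdiff
  -- Step B: moving
  obtain ⟨F, hFf, -, ha, hb⟩ := ml_core n I K hK f n le_rfl
  have huniv : {i : Fin n | i.1 < n} = (Set.univ : Set (Fin n)) :=
    Set.eq_univ_of_forall fun i => i.2
  rw [huniv, Set.image_univ] at ha hb
  set SF : Ideal A := Ideal.span (Set.range F) with hSF
  have hI2I : (I ^ 2 : Ideal A) ≤ I := Ideal.pow_le_self two_ne_zero
  have hFI : ∀ i, F i ∈ I := by
    intro i
    have : F i = f i + (F i - f i) := by ring
    rw [this]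
    exact I.add_mem (hfI i) (hI2I (hFf i))
  have hIeq : I = SF ⊔ I ^ 2 := by
    have h1 : Ideal.span (Set.range f) ≤ SF ⊔ I ^ 2 := by
      rw [Ideal.span_le]
      rintro - ⟨i, rfl⟩
      have hfi : f i = F i - (F i - f i) := by ring
      rw [hfi]
      exact Submodule.sub_mem _
        (Submodule.mem_sup_left (Ideal.subset_span (Set.mem_range_self i)))
        (Submodule.mem_sup_right (hFf i))
    have h2 : SF ≤ I := by
      rw [hSF, Ideal.span_le]
      rintro - ⟨i, rfl⟩
      exact hFI i
    exact le_antisymm (le_trans hIle (sup_le h1 le_sup_right)) (sup_le h2 hI2I)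
  -- Step C: Nakayama
  set N : Submodule A (A ⧸ SF) := Submodule.map SF.mkQ I with hN
  have hNFG : N.FG := (IsNoetherian.noetherian (I : Submodule A A)).map _
  have hmap2 : Submodule.map SF.mkQ (I ^ 2 : Ideal A) = I • N := by
    rw [pow_two, ← Ideal.smul_eq_mul, Submodule.map_smul'']
  have hIN : N ≤ I • N := by
    rintro - ⟨y, hyI, rfl⟩
    have hy2 : y ∈ SF ⊔ I ^ 2 := hIeq ▸ hyI
    obtain ⟨u, hu, z, hz, rfl⟩ := Submodule.mem_sup.mp hy2
    have hu0 : SF.mkQ u = 0 := (Submodule.Quotient.mk_eq_zero _).mpr hu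
    rw [map_add, hu0, zero_add]
    exact hmap2 ▸ Submodule.mem_map_of_mem hz
  obtain ⟨r, hr1, hr0⟩ :=
    Submodule.exists_sub_one_mem_and_smul_eq_zero_of_fg_of_le_smul I N hNFG hIN
  set e : A := 1 - r with he
  have heI : e ∈ I := by
    have : e = -(r - 1) := by rw [he]; ring
    rw [this]
    exact I.neg_mem hr1
  have hre : ∀ z ∈ I, r * z ∈ SF := by
    intro z hz
    have h0 : r • SF.mkQ z = 0 := hr0 _ (Submodule.mem_map_of_mem hz)
    rw [← map_smul] at h0
    rw [Submodule.mkQ_apply, Submodule.Quotient.mk_eq_zero] at h0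
    simpa using h0
  -- build the point v
  have hreSF : r * e ∈ SF := hre e heI
  obtain ⟨g, hg⟩ := Ideal.mem_span_range_iff_exists_fun.mp (hSF ▸ hreSF)
  have hsum : ∑ i, F i * g i = r * e := by
    rw [← hg]
    exact Finset.sum_congr rfl fun i _ => mul_comm _ _
  have hIsQ : IsQPt A n (e, F, g) := by
    show (∑ i, F i * g i) + e * (e - 1) = 0
    rw [hsum, he]; ring
  set v : QPt A n := ⟨(e, F, g), hIsQ⟩ with hv
  have hvI : IdealI A n v = I := by
    refine le_antisymm (Ideal.span_le.mpr ?_) ?_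
    · rintro y (rfl | ⟨i, rfl⟩)
      · exact heI
      · exact hFI ‹_›
    · intro z hz
      have hdecomp : z = r * z + z * e := by rw [he]; ring
      rw [hdecomp]
      refine Ideal.add_mem _ ?_ ?_
      · exact Ideal.span_mono (Set.subset_insert _ _) (hre z hz)
      · exact Ideal.mul_mem_left _ _ (Ideal.subset_span (Set.mem_insert _ _))
  have hIP_of_J : ∀ (P : Ideal A), P.IsPrime → IdealJ A n v ≤ P → ¬ I ≤ P := by
    intro P hP hle hIP
    have h1e : (1 : A) - e ∈ P := hle (Ideal.subset_span (Set.mem_insert _ _))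
    have heP : e ∈ P := hIP heI
    have : (1 : A) ∈ P := by
      have := P.add_mem h1e heP
      simpa using this
    exact hP.ne_top (Ideal.eq_top_of_isUnit_mem _ this isUnit_one)
  have hSFJ : SF ≤ IdealJ A n v := Ideal.span_mono (Set.subset_insert _ _)
  refine ⟨v, ⟨hvI, ?_⟩, ?_, ?_⟩
  · -- InducedBy
    intro i
    refine ⟨hFI i, ?_⟩
    rw [hfω i]
    refine (Ideal.toCotangent_eq I).mpr ?_
    have := Submodule.neg_mem (I ^ 2 : Ideal A) (hFf i)
    simpa using this
  · -- HeightGE J n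
    intro P hP hle
    have hIP : ¬ I ≤ P := hIP_of_J P hP hle
    have hFP : SF ≤ P := hSFJ.trans hle
    obtain ⟨P₀, hP₀m, hP₀le⟩ := Ideal.exists_minimalPrimes_le (J := P) hFP
    have hP₀p : P₀.IsPrime := hP₀m.1.1
    have hIP₀ : ¬ I ≤ P₀ := fun h => hIP (h.trans hP₀le)
    have h1 := ha P₀ hP₀p hP₀m hIP₀
    have h2 : Order.height (⟨P₀, hP₀p⟩ : PrimeSpectrum A) ≤
        Order.height (⟨P, hP⟩ : PrimeSpectrum A) :=
      Order.height_mono ((PrimeSpectrum.asIdeal_le_asIdeal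
        (⟨P₀, hP₀p⟩ : PrimeSpectrum A) ⟨P, hP⟩).mp hP₀le)
    exact le_trans (by exact_mod_cast h1) h2
  · -- comaximality
    by_contra hne
    obtain ⟨Mx, hMx, hleM⟩ := Ideal.exists_le_maximal _ hne
    have hMp : Mx.IsPrime := hMx.isPrime
    have hJM : IdealJ A n v ≤ Mx := le_trans le_sup_left hleM
    have hKM : K ≤ Mx := le_trans le_sup_right hleM
    have hIM : ¬ I ≤ Mx := hIP_of_J Mx hMp hJM
    have hFKM : SF ⊔ K ≤ Mx := sup_le (hSFJ.trans hJM) hKM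
    obtain ⟨P₀, hP₀m, hP₀le⟩ := Ideal.exists_minimalPrimes_le (J := Mx) hFKM
    have hP₀p : P₀.IsPrime := hP₀m.1.1
    have hIP₀ : ¬ I ≤ P₀ := fun h => hIM (h.trans hP₀le)
    have h1 := hb P₀ hP₀p hP₀m hIP₀
    have h2 : (Order.height (⟨P₀, hP₀p⟩ : PrimeSpectrum A) : WithBot ℕ∞) ≤ ringKrullDim A :=
      Order.height_le_krullDim _
    rw [hdim] at h2
    have h3 : (((n + n : ℕ) : ℕ∞) : WithBot ℕ∞) ≤ ((d : ℕ∞) : WithBot ℕ∞) := by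
      refine le_trans ?_ (le_trans h2 ?_)
      · exact_mod_cast h1
      · norm_cast
    have h4 : n + n ≤ d := by exact_mod_cast h3
    omega
end

section
/- Suppose A is a commutative ring and n ≥ 2 is an integer. Let (I, ω) ∈ LO(A,n) and suppose f_1,…,f_n ∈ I induce ω : A^n → I/I², and that (f_1,…,f_n) = I ∩ J for an ideal J with I + J = A. Let ω_J : A^n → J/J² be the orientation induced by f_1,…,f_n. Then Γ̃(ζ(I, ω)) = ζ(J, ω_J) in π_0(Q_{2n})(A). -/
open Polynomial

section Aux

variable {A : Type*} [CommRing A] {n : ℕ}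

private lemma qvec_ext {v w : QVec A n} (h1 : v.1 = w.1) (h2 : v.2.1 = w.2.1)
    (h3 : v.2.2 = w.2.2) : v = w := by
  obtain ⟨a, b, c⟩ := v; obtain ⟨a', b', c'⟩ := w
  simp_all

/-- Sum of products through `C`. -/
private lemma csum (f u : Fin n → A) :
    (∑ i, C (f i) * C (u i) : Polynomial A) = C (∑ i, f i * u i) := by
  rw [map_sum]
  exact Finset.sum_congr rfl fun i _ => by rw [map_mul]

/-- The basic connecting move: two points with the same `f`-part whose `s`-parts differ
by an element of `(f)` are elementarily homotopic. -/
private lemma conn (p q : QPt A n) (hf : p.1.2.1 = q.1.2.1)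
    (hs : q.1.1 - p.1.1 ∈ Ideal.span (Set.range p.1.2.1)) :
    zeta0 A n p = zeta0 A n q := by
  obtain ⟨⟨s0, f, g0⟩, hp⟩ := p
  obtain ⟨⟨s1, f', g1⟩, hq⟩ := q
  simp only at hf hs
  subst hf
  simp only [IsQPt] at hp hq
  obtain ⟨c, hc⟩ := (Submodule.mem_span_range_iff_exists_fun A).mp hs
  simp only [smul_eq_mul] at hc
  -- the homotopy
  set d : A := s1 - s0 with hd
  have hs1 : s1 = s0 + d := by rw [hd]; ring
  have hA0 : ∑ i, f i * g0 i = -(s0 * (s0 - 1)) := by linear_combination hp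
  have hA1 : ∑ i, f i * (g1 i - g0 i) = -(d * (2 * s0 - 1) + d * d) := by
    have hsplit : ∑ i, f i * (g1 i - g0 i)
        = (∑ i, f i * g1 i) - ∑ i, f i * g0 i := by
      rw [← Finset.sum_sub_distrib]
      exact Finset.sum_congr rfl fun i _ => by ring
    rw [hs1] at hq
    rw [hsplit]
    linear_combination hq - hp
  have hA2 : ∑ i, f i * (c i * d) = d * d := by
    have h1 : ∑ i, f i * (c i * d) = (∑ i, c i * f i) * d := by
      rw [Finset.sum_mul]
      exact Finset.sum_congr rfl fun i _ => by ring
    rw [h1, hc]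
  refine Quot.sound ⟨⟨(C s0 + C d * X, fun i => C (f i),
      fun i => C (g0 i) + C (g1 i - g0 i) * X + C (c i * d) * (X * (1 - X))), ?_⟩, ?_, ?_⟩
  · -- it is a point of the quadric over A[T]
    show (∑ i, C (f i) * (C (g0 i) + C (g1 i - g0 i) * X + C (c i * d) * (X * (1 - X))))
        + (C s0 + C d * X) * ((C s0 + C d * X) - 1) = 0
    have T2 : (∑ i, C (f i) * (C (g1 i - g0 i) * X) : Polynomial A)
        = C (∑ i, f i * (g1 i - g0 i)) * X := by
      rw [map_sum, Finset.sum_mul]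
      exact Finset.sum_congr rfl fun i _ => by rw [map_mul]; ring
    have T3 : (∑ i, C (f i) * (C (c i * d) * (X * (1 - X))) : Polynomial A)
        = C (∑ i, f i * (c i * d)) * (X * (1 - X)) := by
      rw [map_sum, Finset.sum_mul]
      exact Finset.sum_congr rfl fun i _ => by simp only [map_mul]; ring
    simp only [mul_add, Finset.sum_add_distrib]
    rw [T2, T3, csum, hA0, hA1, hA2]
    simp only [map_neg, map_add, map_mul, map_sub, map_one, map_ofNat]
    ring
  · -- value at 0
    apply Subtype.ext
    refine qvec_ext ?_ ?_ ?_ <;> simp [evalQ]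
  · -- value at 1
    apply Subtype.ext
    refine qvec_ext ?_ ?_ ?_
    · simp [evalQ, hs1]
    · funext i; simp [evalQ]
    · funext i; simp [evalQ]

/-- Endpoint congruence for the idempotent lift. -/
private lemma endpoint_cong (K : Ideal A) (F : Fin n → Polynomial A) (S : Polynomial A)
    (hee : ∀ x ∈ K.map ((Ideal.Quotient.mk (Ideal.span (Set.range F))).comp
      (C : A →+* Polynomial A)),
      (Ideal.Quotient.mk (Ideal.span (Set.range F)) S) * x = x)
    (heN : Ideal.Quotient.mk (Ideal.span (Set.range F)) S ∈
      K.map ((Ideal.Quotient.mk (Ideal.span (Set.range F))).comp (C : A →+* Polynomial A)))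
    (r σ : A) (x : Fin n → A)
    (hFe : ∀ i, (F i).eval r = x i)
    (hσK : σ ∈ K)
    (hKx : K = Ideal.span (insert σ (Set.range x)))
    (hσ2 : σ - σ * σ ∈ Ideal.span (Set.range x)) :
    S.eval r - σ ∈ Ideal.span (Set.range x) := by
  set L : Ideal (Polynomial A) := Ideal.span (Set.range F) with hL
  set Ix : Ideal A := Ideal.span (Set.range x) with hIx
  set φ : A →+* (Polynomial A) ⧸ L := (Ideal.Quotient.mk L).comp (C : A →+* Polynomial A)
    with hφ
  have hker : ∀ u ∈ L, ((Ideal.Quotient.mk Ix).comp (Polynomial.evalRingHom r)) u = 0 := by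
    intro u hu
    have hle : L ≤ RingHom.ker ((Ideal.Quotient.mk Ix).comp (Polynomial.evalRingHom r)) := by
      rw [hL, Ideal.span_le]
      rintro _ ⟨i, rfl⟩
      simp only [SetLike.mem_coe, RingHom.mem_ker, RingHom.comp_apply, coe_evalRingHom, hFe i]
      exact Ideal.Quotient.eq_zero_iff_mem.mpr (Ideal.subset_span ⟨i, rfl⟩)
    exact hle hu
  set ψ : (Polynomial A) ⧸ L →+* A ⧸ Ix :=
    Ideal.Quotient.lift L ((Ideal.Quotient.mk Ix).comp (Polynomial.evalRingHom r)) hker with hψ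
  have hψmk : ∀ u : Polynomial A, ψ (Ideal.Quotient.mk L u) = Ideal.Quotient.mk Ix (u.eval r) :=
    fun u => by simp [hψ]
  have hψφ : ∀ z : A, ψ (φ z) = Ideal.Quotient.mk Ix z := fun z => by
    rw [hφ, RingHom.comp_apply, hψmk]; simp
  set xe : A ⧸ Ix := Ideal.Quotient.mk Ix (S.eval r) with hxe
  set σb : A ⧸ Ix := Ideal.Quotient.mk Ix σ with hσb
  have fact1 : σb * σb = σb := by
    rw [hσb, ← map_mul]
    exact (Ideal.Quotient.eq.mpr (by simpa using (neg_mem hσ2)))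
  have fact2 : xe * σb = σb := by
    have h1 : (Ideal.Quotient.mk L S) * (φ σ) = φ σ :=
      hee (φ σ) (Ideal.mem_map_of_mem φ hσK)
    have := congrArg ψ h1
    rw [map_mul, hψmk, hψφ] at this
    rw [hxe, hσb]
    exact this
  have fact3 : xe ∈ Ideal.span ({σb} : Set (A ⧸ Ix)) := by
    have h1 : ψ (Ideal.Quotient.mk L S) ∈ Ideal.map ψ (K.map φ) :=
      Ideal.mem_map_of_mem ψ heN
    rw [Ideal.map_map] at h1
    have h2 : Ideal.map (ψ.comp φ) K ≤ Ideal.span ({σb} : Set (A ⧸ Ix)) := by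
      rw [Ideal.map_le_iff_le_comap, hKx, Ideal.span_le]
      intro z hz
      rcases hz with rfl | ⟨i, rfl⟩
      · simp only [SetLike.mem_coe, Ideal.mem_comap, RingHom.comp_apply, hψφ]
        exact Ideal.subset_span rfl
      · simp only [SetLike.mem_coe, Ideal.mem_comap, RingHom.comp_apply, hψφ]
        have : Ideal.Quotient.mk Ix (x i) = 0 :=
          Ideal.Quotient.eq_zero_iff_mem.mpr (Ideal.subset_span ⟨i, rfl⟩)
        rw [this]
        exact Ideal.zero_mem _
    have h3 := h2 h1
    rwa [hψmk] at h3
  rw [Ideal.mem_span_singleton'] at fact3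
  obtain ⟨m, hm⟩ := fact3
  have fact4 : xe = σb := by
    have h1 : σb * xe = xe := by
      rw [← hm, ← mul_assoc, mul_comm σb m, mul_assoc, fact1]
    rw [← h1, mul_comm, fact2]
  rw [hxe, hσb] at fact4
  exact Ideal.Quotient.eq.mp fact4

/-- Well-definedness: two points of the quadric with the same ideal and the same induced
orientation data (f-parts congruent mod `K²`) are equal in `π₀`. -/
private lemma lemW (K : Ideal A) (p q : QPt A n)
    (hpK : IdealI A n p = K) (hqK : IdealI A n q = K)
    (hfg : ∀ i, p.1.2.1 i - q.1.2.1 i ∈ K ^ 2) :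
    zeta0 A n p = zeta0 A n q := by
  obtain ⟨⟨s, a, b⟩, hp⟩ := p
  obtain ⟨⟨t, c, d⟩, hq⟩ := q
  simp only [IdealI] at hpK hqK
  simp only at hfg
  simp only [IsQPt] at hp hq
  have hsK : s ∈ K := hpK ▸ Ideal.subset_span (Set.mem_insert _ _)
  have htK : t ∈ K := hqK ▸ Ideal.subset_span (Set.mem_insert _ _)
  have haK : ∀ i, a i ∈ K := fun i =>
    hpK ▸ Ideal.subset_span (Set.mem_insert_of_mem _ ⟨i, rfl⟩)
  have hcK : ∀ i, c i ∈ K := fun i =>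
    hqK ▸ Ideal.subset_span (Set.mem_insert_of_mem _ ⟨i, rfl⟩)
  -- the interpolating generators
  set F : Fin n → Polynomial A := fun i => C (a i) + C (c i - a i) * X with hF
  set L : Ideal (Polynomial A) := Ideal.span (Set.range F) with hL
  set φ : A →+* (Polynomial A) ⧸ L := (Ideal.Quotient.mk L).comp (C : A →+* Polynomial A)
    with hφ
  set N : Ideal ((Polynomial A) ⧸ L) := K.map φ with hN
  have hFmem : ∀ i, Ideal.Quotient.mk L (F i) = 0 := fun i =>
    Ideal.Quotient.eq_zero_iff_mem.mpr (Ideal.subset_span ⟨i, rfl⟩)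
  have hai : ∀ i, φ (a i) ∈ N ^ 2 := by
    intro i
    have h1 : φ (a i) = -(φ (c i - a i) * Ideal.Quotient.mk L X) := by
      have h2 : (C (a i) : Polynomial A) = F i - C (c i - a i) * X := by rw [hF]; ring
      rw [hφ, RingHom.comp_apply, h2, map_sub, hFmem i, RingHom.comp_apply, map_mul]
      ring
    rw [h1]
    apply neg_mem
    apply Ideal.mul_mem_right
    have h3 : c i - a i ∈ K ^ 2 := by
      have := hfg i
      simpa using (neg_mem this)
    have h4 : φ (c i - a i) ∈ Ideal.map φ (K ^ 2) := Ideal.mem_map_of_mem φ h3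
    rwa [Ideal.map_pow] at h4
  have hN2 : N ≤ N ^ 2 := by
    have hgen : K ≤ Ideal.comap φ (N ^ 2) := by
      rw [← hpK, Ideal.span_le]
      intro z hz
      simp only [Set.mem_insert_iff, Set.mem_range] at hz
      rcases hz with rfl | ⟨i, rfl⟩
      · -- z = s
        simp only [SetLike.mem_coe, Ideal.mem_comap]
        have h2 : φ z = φ z * φ z + ∑ i, φ (a i) * φ (b i) := by
          have h1 : z = z * z + ∑ i, a i * b i := by linear_combination -hp
          calc φ z = φ (z * z + ∑ i, a i * b i) := by rw [← h1]
            _ = φ z * φ z + ∑ i, φ (a i) * φ (b i) := by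
                rw [map_add, map_mul, map_sum]
                simp only [map_mul]
        rw [h2]
        refine add_mem ?_ (sum_mem fun i _ => Ideal.mul_mem_right _ _ (hai i))
        rw [sq]
        exact Ideal.mul_mem_mul (Ideal.mem_map_of_mem φ hsK) (Ideal.mem_map_of_mem φ hsK)
      · simp only [SetLike.mem_coe, Ideal.mem_comap]
        exact hai i
    calc N = Ideal.map φ K := hN
      _ ≤ N ^ 2 := Ideal.map_le_iff_le_comap.mpr hgen
  have hFG : N.FG := by
    rw [hN, ← hpK, Ideal.map_span]
    exact Submodule.fg_span (((Set.finite_range a).insert s).image _)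
  obtain ⟨r, hr1, hr0⟩ :=
    Submodule.exists_sub_one_mem_and_smul_eq_zero_of_fg_of_le_smul N N hFG
      (by rw [Ideal.smul_eq_mul]; exact hN2.trans (sq N).le)
  set e : (Polynomial A) ⧸ L := 1 - r with he
  have heN : e ∈ N := by
    have := neg_mem hr1
    simpa [he] using this
  have hee : ∀ x ∈ N, e * x = x := by
    intro x hx
    have h1 : r * x = 0 := by simpa [smul_eq_mul] using hr0 x hx
    have h2 : e * x = x - r * x := by rw [he]; ring
    rw [h2, h1, sub_zero]
  obtain ⟨S, hS⟩ := Ideal.Quotient.mk_surjective e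
  have hSS : S - S * S ∈ L := by
    rw [← Ideal.Quotient.eq_zero_iff_mem, map_sub, map_mul, hS]
    rw [hee e heN]
    ring
  obtain ⟨G, hG⟩ := (Submodule.mem_span_range_iff_exists_fun _).mp (hL ▸ hSS)
  simp only [smul_eq_mul] at hG
  -- the big homotopy
  have hHQ : IsQPt (Polynomial A) n (S, F, G) := by
    show (∑ i, F i * G i) + S * (S - 1) = 0
    have h1 : ∑ i, F i * G i = S - S * S := by
      rw [← hG]
      exact Finset.sum_congr rfl fun i _ => by ring
    rw [h1]; ring
  set Hbig : QPt (Polynomial A) n := ⟨(S, F, G), hHQ⟩ with hHbig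
  -- endpoint congruences
  have hend0 : S.eval 0 - s ∈ Ideal.span (Set.range a) := by
    refine endpoint_cong K F S ?_ (hS ▸ heN) 0 s a (fun i => by simp [hF]) hsK hpK.symm ?_
    · intro x hx; rw [hS]; exact hee x hx
    · have h1 : s - s * s = ∑ i, a i * b i := by linear_combination -hp
      rw [h1]
      exact sum_mem fun i _ => Ideal.mul_mem_right _ _ (Ideal.subset_span ⟨i, rfl⟩)
  have hend1 : S.eval 1 - t ∈ Ideal.span (Set.range c) := by
    refine endpoint_cong K F S ?_ (hS ▸ heN) 1 t c (fun i => by simp [hF]) htK hqK.symm ?_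
    · intro x hx; rw [hS]; exact hee x hx
    · have h1 : t - t * t = ∑ i, c i * d i := by linear_combination -hq
      rw [h1]
      exact sum_mem fun i _ => Ideal.mul_mem_right _ _ (Ideal.subset_span ⟨i, rfl⟩)
  -- now assemble the chain
  have step1 : zeta0 A n ⟨(s, a, b), hp⟩ = zeta0 A n (evalQ A n 0 Hbig) := by
    refine conn _ _ ?_ ?_
    · funext i; simp [evalQ, hHbig, hF]
    · show (S.eval 0) - s ∈ Ideal.span (Set.range a)
      exact hend0
  have step2 : zeta0 A n (evalQ A n 0 Hbig) = zeta0 A n (evalQ A n 1 Hbig) :=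
    Quot.sound ⟨Hbig, rfl, rfl⟩
  have step3 : zeta0 A n (evalQ A n 1 Hbig) = zeta0 A n ⟨(t, c, d), hq⟩ := by
    have hfc : (fun i => (F i).eval 1) = c := by
      funext i; simp [hF]
    refine conn _ _ ?_ ?_
    · show (fun i => (F i).eval 1) = c
      exact hfc
    · show t - S.eval 1 ∈ Ideal.span (Set.range (fun i => (F i).eval 1))
      rw [hfc]
      simpa using (neg_mem hend1)
  exact (step1.trans step2).trans step3

/-- `Γ` descends to `π₀`. -/
private lemma gamma_congr (p q : QPt A n) (h : zeta0 A n p = zeta0 A n q) :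
    zeta0 A n (gammaQ A n p) = zeta0 A n (gammaQ A n q) := by
  have hrel : ∀ u v : QPt A n, QHomRel A n u v →
      QHomRel A n (gammaQ A n u) (gammaQ A n v) := by
    rintro u v ⟨H, h0, h1⟩
    refine ⟨gammaQ (Polynomial A) n H, ?_, ?_⟩
    · rw [← h0]; apply Subtype.ext; refine qvec_ext ?_ ?_ ?_ <;> simp [evalQ, gammaQ]
    · rw [← h1]; apply Subtype.ext; refine qvec_ext ?_ ?_ ?_ <;> simp [evalQ, gammaQ]
  exact congrArg (Quot.map (gammaQ A n) hrel) h

end Aux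


/-- Let `A` be a commutative ring, `n ≥ 2`, `(I, ω) ∈ LO(A,n)` induced by
`f₁,…,fₙ ∈ I` with `(f₁,…,fₙ) = I ∩ J` and `I + J = A`; let `ω_J` be the orientation of `J`
induced by the `fᵢ`.  Then `Γ̃(ζ(I, ω)) = ζ(J, ω_J)` in `π₀(Q_{2n})(A)`. -/
theorem gamma_of_zeta (A : Type*) [CommRing A] (n : ℕ) (hn : 2 ≤ n)
    (I J : Ideal A) (f : Fin n → A)
    (ω : (Fin n → A) →ₗ[A] I.Cotangent) (hω : Function.Surjective ω)
    (ωJ : (Fin n → A) →ₗ[A] J.Cotangent) (hωJ : Function.Surjective ωJ)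
    (hfI : InducedBy A n I ω f) (hfJ : InducedBy A n J ωJ f)
    (hIJ : Ideal.span (Set.range f) = I ⊓ J) (hco : I ⊔ J = ⊤) :
    ∀ v w : QPt A n, EtaEq A n v I ω → EtaEq A n w J ωJ →
      zeta0 A n (gammaQ A n v) = zeta0 A n w := by
  intro v w hv hw
  -- a splitting element `e ∈ I` with `1 - e ∈ J`
  have h1 : (1 : A) ∈ I ⊔ J := by rw [hco]; trivial
  obtain ⟨e, heI, y, hyJ, hey⟩ := Submodule.mem_sup.mp h1
  have h1e : (1 : A) - e ∈ J := by
    rw [show (1 : A) - e = y by linear_combination -hey]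
    exact hyJ
  have hfIJ : ∀ i, f i ∈ I ⊓ J := fun i => hIJ ▸ Ideal.subset_span ⟨i, rfl⟩
  have hef : e - e * e ∈ Ideal.span (Set.range f) := by
    rw [hIJ, show e - e * e = e * (1 - e) by ring]
    exact Submodule.mem_inf.mpr
      ⟨Ideal.mul_mem_right _ _ heI, Ideal.mul_mem_left _ _ h1e⟩
  obtain ⟨g, hg⟩ := (Submodule.mem_span_range_iff_exists_fun A).mp hef
  simp only [smul_eq_mul] at hg
  have huQ : IsQPt A n (e, f, g) := by
    show (∑ i, f i * g i) + e * (e - 1) = 0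
    have h2 : ∑ i, f i * g i = ∑ i, g i * f i :=
      Finset.sum_congr rfl fun i _ => mul_comm _ _
    rw [h2, hg]; ring
  set u : QPt A n := ⟨(e, f, g), huQ⟩ with hu
  have hIu : IdealI A n u = I := by
    simp only [IdealI, hu]
    apply le_antisymm
    · rw [Ideal.span_le]
      intro z hz
      simp only [Set.mem_insert_iff, Set.mem_range] at hz
      rcases hz with rfl | ⟨i, rfl⟩
      · exact heI
      · exact (hfIJ i).1
    · intro z hz
      have hz2 : z * (1 - e) ∈ Ideal.span (Set.range f) := by
        rw [hIJ]
        exact Submodule.mem_inf.mpr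
          ⟨Ideal.mul_mem_right _ _ hz, Ideal.mul_mem_left _ _ h1e⟩
      rw [show z = z * e + z * (1 - e) by ring]
      refine add_mem (Ideal.mul_mem_left _ _ (Ideal.subset_span (Set.mem_insert _ _))) ?_
      exact Ideal.span_mono (Set.subset_insert _ _) hz2
  have hJu : Ideal.span (insert (1 - e) (Set.range f)) = J := by
    apply le_antisymm
    · rw [Ideal.span_le]
      intro z hz
      simp only [Set.mem_insert_iff, Set.mem_range] at hz
      rcases hz with rfl | ⟨i, rfl⟩
      · exact h1e
      · exact (hfIJ i).2
    · intro z hz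
      have hz2 : z * e ∈ Ideal.span (Set.range f) := by
        rw [hIJ]
        exact Submodule.mem_inf.mpr
          ⟨Ideal.mul_mem_left _ _ heI, Ideal.mul_mem_right _ _ hz⟩
      rw [show z = z * (1 - e) + z * e by ring]
      refine add_mem (Ideal.mul_mem_left _ _ (Ideal.subset_span (Set.mem_insert _ _))) ?_
      exact Ideal.span_mono (Set.subset_insert _ _) hz2
  -- congruences of the f-parts
  have haI : ∀ i, v.1.2.1 i - f i ∈ I ^ 2 := by
    intro i
    obtain ⟨hm1, he1⟩ := hv.2 i
    obtain ⟨hm2, he2⟩ := hfI i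
    simpa using (Ideal.toCotangent_eq I).mp (he1.symm.trans he2)
  have hcJ : ∀ i, f i - w.1.2.1 i ∈ J ^ 2 := by
    intro i
    obtain ⟨hm1, he1⟩ := hw.2 i
    obtain ⟨hm2, he2⟩ := hfJ i
    simpa using (Ideal.toCotangent_eq J).mp (he2.symm.trans he1)
  -- assemble
  have step_vu : zeta0 A n v = zeta0 A n u :=
    lemW I v u hv.1 hIu (fun i => haI i)
  have hGu : IdealI A n (gammaQ A n u) = J := by
    show Ideal.span (insert (1 - e) (Set.range f)) = J
    exact hJu
  have step_uw : zeta0 A n (gammaQ A n u) = zeta0 A n w :=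
    lemW J (gammaQ A n u) w hGu hw.1 (fun i => hcJ i)
  exact (gamma_congr v u step_vu).trans step_uw
end

section
/- Suppose (A, m) is a commutative local ring with 1/2 ∈ A and n ≥ 1 is an integer. Let u ∈ Q'_{2n}(A) and u_0 := (1; 0,…,0; 0,…,0) ∈ Q'_{2n}(A). Then there exists σ in the elementary orthogonal group EO(A, q_{2n+1}) such that σ maps u to u_0. -/
open Polynomial

section Orth
variable (A : Type*) [CommRing A] (n : ℕ)

/-- The affine space `A^{2n+1}`, with coordinates `(z; x₁,…,xₙ; y₁,…,yₙ)`. -/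
abbrev OVec := A × (Fin n → A) × (Fin n → A)

/-- The quadratic form `q_{2n+1} = Σ xᵢ yᵢ + z²`. -/
def qForm (v : OVec A n) : A := (∑ i, v.2.1 i * v.2.2 i) + v.1 * v.1

/-- `Q'_{2n}(A) = {u ∈ A^{2n+1} : q_{2n+1}(u) = 1}`. -/
def QPt' := {v : OVec A n // qForm A n v = 1}

/-- Inclusion of constants `A^{2n+1} → A[T]^{2n+1}`. -/
noncomputable def constV (v : OVec A n) : OVec (Polynomial A) n :=
  (Polynomial.C v.1, fun i => Polynomial.C (v.2.1 i), fun i => Polynomial.C (v.2.2 i))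

/-- Substitution `T = t`, componentwise. -/
noncomputable def evalV (t : A) (v : OVec (Polynomial A) n) : OVec A n :=
  (v.1.eval t, fun i => (v.2.1 i).eval t, fun i => (v.2.2 i).eval t)

/-- Substitution `T = t` on `Q'_{2n}(A[T])`. -/
noncomputable def evalQ' (t : A) (v : QPt' (Polynomial A) n) : QPt' A n :=
  ⟨evalV A n t v.1, by
    have h := congrArg (Polynomial.eval t) v.2
    simpa [qForm, evalV, Polynomial.eval_finset_sum] using h⟩

/-- `σ ∈ O(A, q_{2n+1})`: a linear automorphism of `A^{2n+1}` preserving `q_{2n+1}`. -/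
def IsOrth (σ : OVec A n ≃ₗ[A] OVec A n) : Prop :=
  ∀ v : OVec A n, qForm A n (σ v) = qForm A n v

/-- The elementary homotopy relation on `Q'_{2n}(A)`. -/
def QHomRel' : QPt' A n → QPt' A n → Prop := fun u v =>
  ∃ H : QPt' (Polynomial A) n, evalQ' A n 0 H = u ∧ evalQ' A n 1 H = v

/-- `π₀(Q'_{2n})(A)`. -/
def Pi0Q' := Quot (QHomRel' A n)

end Orth
section S19
variable (A : Type*) [CommRing A] (n : ℕ)

/-- `ε_{0,j}(λ)` (type (i)): `z ↦ z + λxⱼ`, `yⱼ ↦ yⱼ − 2λz − λ²xⱼ`. -/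
def eps1 (j : Fin n) (l : A) : OVec A n → OVec A n := fun v =>
  (v.1 + l * v.2.1 j, v.2.1,
    Function.update v.2.2 j (v.2.2 j - 2 * l * v.1 - l ^ 2 * v.2.1 j))

/-- `ε_{0,n+j}(λ)` (type (ii)): `z ↦ z + λyⱼ`, `xⱼ ↦ xⱼ − 2λz − λ²yⱼ`. -/
def eps2 (j : Fin n) (l : A) : OVec A n → OVec A n := fun v =>
  (v.1 + l * v.2.2 j,
    Function.update v.2.1 j (v.2.1 j - 2 * l * v.1 - l ^ 2 * v.2.2 j), v.2.2)

/-- Type (iii): for `i ≠ j`, `xᵢ ↦ xᵢ + λxⱼ`, `yⱼ ↦ yⱼ − λyᵢ`. -/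
def eps3 (i j : Fin n) (l : A) : OVec A n → OVec A n := fun v =>
  (v.1, Function.update v.2.1 i (v.2.1 i + l * v.2.1 j),
    Function.update v.2.2 j (v.2.2 j - l * v.2.2 i))

/-- Type (iv): for `i ≠ j`, `xᵢ ↦ xᵢ + λyⱼ`, `xⱼ ↦ xⱼ − λyᵢ`. -/
def eps4 (i j : Fin n) (l : A) : OVec A n → OVec A n := fun v =>
  (v.1,
    Function.update (Function.update v.2.1 i (v.2.1 i + l * v.2.2 j)) j
      (v.2.1 j - l * v.2.2 i), v.2.2)

/-- Type (v): for `i ≠ j`, `yᵢ ↦ yᵢ + λxⱼ`, `yⱼ ↦ yⱼ − λxᵢ`. -/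
def eps5 (i j : Fin n) (l : A) : OVec A n → OVec A n := fun v =>
  (v.1, v.2.1,
    Function.update (Function.update v.2.2 i (v.2.2 i + l * v.2.1 j)) j
      (v.2.2 j - l * v.2.1 i))

/-- The set of elementary orthogonal transformations generating `EO(A, q_{2n+1})`. -/
def ElemOrth : Set (OVec A n → OVec A n) :=
  {g | ∃ l : A,
    (∃ j, g = eps1 A n j l) ∨ (∃ j, g = eps2 A n j l) ∨
    (∃ i j, i ≠ j ∧ g = eps3 A n i j l) ∨
    (∃ i j, i ≠ j ∧ g = eps4 A n i j l) ∨
    (∃ i j, i ≠ j ∧ g = eps5 A n i j l)}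

end S19

section Aux

variable {A : Type*} [CommRing A] {n : ℕ}

/-- Reachability by a sequence of elementary orthogonal transformations. -/
def Reach (A : Type*) [CommRing A] (n : ℕ) (u v : OVec A n) : Prop :=
  ∃ L : List (OVec A n → OVec A n), (∀ g ∈ L, g ∈ ElemOrth A n) ∧
    L.foldr (· ∘ ·) id u = v

lemma Reach.refl (v : OVec A n) : Reach A n v v := ⟨[], by simp, rfl⟩

lemma foldr_comp_apply (L : List (OVec A n → OVec A n)) (c : OVec A n → OVec A n)
    (u : OVec A n) : L.foldr (· ∘ ·) c u = L.foldr (· ∘ ·) id (c u) := by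
  induction L with
  | nil => rfl
  | cons g L ih => simp only [List.foldr_cons, Function.comp_apply, ih]

lemma Reach.trans {u v w : OVec A n} (h1 : Reach A n u v) (h2 : Reach A n v w) :
    Reach A n u w := by
  obtain ⟨L1, hL1, he1⟩ := h1
  obtain ⟨L2, hL2, he2⟩ := h2
  refine ⟨L2 ++ L1, ?_, ?_⟩
  · intro g hg
    rcases List.mem_append.1 hg with h | h
    · exact hL2 g h
    · exact hL1 g h
  · rw [List.foldr_append, foldr_comp_apply, he1, he2]

lemma Reach.single {g : OVec A n → OVec A n} (hg : g ∈ ElemOrth A n) (v : OVec A n) :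
    Reach A n v (g v) := ⟨[g], by simpa using hg, rfl⟩

lemma eps1_mem (j : Fin n) (l : A) : eps1 A n j l ∈ ElemOrth A n :=
  ⟨l, Or.inl ⟨j, rfl⟩⟩

lemma eps2_mem (j : Fin n) (l : A) : eps2 A n j l ∈ ElemOrth A n :=
  ⟨l, Or.inr (Or.inl ⟨j, rfl⟩)⟩

lemma eps3_mem {i j : Fin n} (h : i ≠ j) (l : A) : eps3 A n i j l ∈ ElemOrth A n :=
  ⟨l, Or.inr (Or.inr (Or.inl ⟨i, j, h, rfl⟩))⟩

lemma eps5_mem {i j : Fin n} (h : i ≠ j) (l : A) : eps5 A n i j l ∈ ElemOrth A n :=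
  ⟨l, Or.inr (Or.inr (Or.inr (Or.inr ⟨i, j, h, rfl⟩)))⟩

lemma sum_mul_update (x y : Fin n → A) (j : Fin n) (c : A) :
    ∑ i, x i * Function.update y j c i = (∑ i, x i * y i) - x j * y j + x j * c := by
  have h : (fun i => x i * Function.update y j c i)
      = Function.update (fun i => x i * y i) j (x j * c) := by
    funext i
    rcases eq_or_ne i j with rfl | h
    · simp
    · simp [Function.update_of_ne h]
  rw [h, Finset.sum_update_of_mem (Finset.mem_univ j),
    Finset.sum_eq_sum_sdiff_singleton_add (Finset.mem_univ j) (fun i => x i * y i)]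
  ring

lemma sum_update_mul (x y : Fin n → A) (j : Fin n) (c : A) :
    ∑ i, Function.update x j c i * y i = (∑ i, x i * y i) - x j * y j + c * y j := by
  calc ∑ i, Function.update x j c i * y i
      = ∑ i, y i * Function.update x j c i := by
        exact Finset.sum_congr rfl fun i _ => mul_comm _ _
    _ = (∑ i, y i * x i) - y j * x j + y j * c := sum_mul_update y x j c
    _ = (∑ i, x i * y i) - x j * y j + c * y j := by
        rw [Finset.sum_congr rfl fun i _ => mul_comm (y i) (x i)]; ring

lemma q_eps1 (j : Fin n) (l : A) (v : OVec A n) :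
    qForm A n (eps1 A n j l v) = qForm A n v := by
  simp only [qForm, eps1, sum_mul_update]
  ring

lemma q_eps2 (j : Fin n) (l : A) (v : OVec A n) :
    qForm A n (eps2 A n j l v) = qForm A n v := by
  simp only [qForm, eps2, sum_update_mul]
  ring

lemma q_eps3 {i j : Fin n} (h : i ≠ j) (l : A) (v : OVec A n) :
    qForm A n (eps3 A n i j l v) = qForm A n v := by
  simp only [qForm, eps3, sum_mul_update, sum_update_mul,
    Function.update_of_ne (Ne.symm h), Function.update_of_ne h]
  ring

lemma q_eps5 {i j : Fin n} (h : i ≠ j) (l : A) (v : OVec A n) :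
    qForm A n (eps5 A n i j l v) = qForm A n v := by
  simp only [qForm, eps5, sum_mul_update, Function.update_of_ne (Ne.symm h)]
  ring

/-- In a local ring, if `q(v) = 1` then either `z` is a unit or some `xᵢ` and `yᵢ`
are both units. -/
lemma mem_maxIdeal_of_not_isUnit [IsLocalRing A] {a : A} (h : ¬ IsUnit a) :
    a ∈ IsLocalRing.maximalIdeal A :=
  (IsLocalRing.mem_maximalIdeal a).2 (mem_nonunits_iff.2 h)

lemma not_isUnit_of_mem_maxIdeal [IsLocalRing A] {a : A}
    (h : a ∈ IsLocalRing.maximalIdeal A) : ¬ IsUnit a :=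
  mem_nonunits_iff.1 ((IsLocalRing.mem_maximalIdeal a).1 h)

lemma unit_coord [IsLocalRing A] {v : OVec A n} (hq : qForm A n v = 1) :
    IsUnit v.1 ∨ ∃ i, IsUnit (v.2.1 i) ∧ IsUnit (v.2.2 i) := by
  by_contra hcon
  push_neg at hcon
  obtain ⟨hz, hxy⟩ := hcon
  have hmem : qForm A n v ∈ IsLocalRing.maximalIdeal A := by
    refine Ideal.add_mem _ (Ideal.sum_mem _ fun i _ => ?_) ?_
    · by_cases hx : IsUnit (v.2.1 i)
      · exact Ideal.mul_mem_left _ _ (mem_maxIdeal_of_not_isUnit (hxy i hx))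
      · exact Ideal.mul_mem_right _ _ (mem_maxIdeal_of_not_isUnit hx)
    · exact Ideal.mul_mem_left _ _ (mem_maxIdeal_of_not_isUnit hz)
  rw [hq] at hmem
  exact (IsLocalRing.maximalIdeal.isMaximal A).ne_top (Ideal.eq_top_of_isUnit_mem _ hmem isUnit_one)

/-- Step 1: reach a vector whose `x_{i0}` coordinate is a unit. -/
lemma step1 [IsLocalRing A] [Invertible (2 : A)] (i0 : Fin n) {v : OVec A n}
    (hq : qForm A n v = 1) :
    ∃ w : OVec A n, Reach A n v w ∧ qForm A n w = 1 ∧ IsUnit (w.2.1 i0) := by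
  by_cases hx0 : IsUnit (v.2.1 i0)
  · exact ⟨v, Reach.refl v, hq, hx0⟩
  rcases unit_coord hq with hz | ⟨i, hxi, _⟩
  · -- z is a unit: use eps2 with λ = 1 or λ = -1
    have key : IsUnit (v.2.1 i0 - 2 * v.1 - v.2.2 i0) ∨
        IsUnit (v.2.1 i0 + 2 * v.1 - v.2.2 i0) := by
      by_contra hc
      push_neg at hc
      obtain ⟨h1, h2⟩ := hc
      have hm1 := mem_maxIdeal_of_not_isUnit h1
      have hm2 := mem_maxIdeal_of_not_isUnit h2
      have h4 : (4 : A) * v.1 ∈ IsLocalRing.maximalIdeal A := by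
        have := Ideal.sub_mem _ hm2 hm1
        have he : (v.2.1 i0 + 2 * v.1 - v.2.2 i0) - (v.2.1 i0 - 2 * v.1 - v.2.2 i0)
            = 4 * v.1 := by ring
        rwa [he] at this
      have h4u : IsUnit (4 : A) := by
        have : IsUnit (2 : A) := isUnit_of_invertible 2
        have h22 : (4 : A) = 2 * 2 := by norm_num
        rw [h22]; exact this.mul this
      have hzm : v.1 ∈ IsLocalRing.maximalIdeal A := by
        obtain ⟨c, hc4⟩ := h4u.exists_left_inv
        have : c * (4 * v.1) ∈ IsLocalRing.maximalIdeal A := Ideal.mul_mem_left _ _ h4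
        rwa [← mul_assoc, hc4, one_mul] at this
      exact not_isUnit_of_mem_maxIdeal hzm hz
    rcases key with h | h
    · refine ⟨eps2 A n i0 1 v, Reach.single (eps2_mem i0 1) v, by rw [q_eps2, hq], ?_⟩
      simpa [eps2] using (by
        have : v.2.1 i0 - 2 * 1 * v.1 - 1 ^ 2 * v.2.2 i0
            = v.2.1 i0 - 2 * v.1 - v.2.2 i0 := by ring
        rw [this]; exact h : IsUnit (v.2.1 i0 - 2 * 1 * v.1 - 1 ^ 2 * v.2.2 i0))
    · refine ⟨eps2 A n i0 (-1) v, Reach.single (eps2_mem i0 (-1)) v, by rw [q_eps2, hq], ?_⟩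
      simpa [eps2] using (by
        have : v.2.1 i0 - 2 * (-1) * v.1 - (-1) ^ 2 * v.2.2 i0
            = v.2.1 i0 + 2 * v.1 - v.2.2 i0 := by ring
        rw [this]; exact h : IsUnit (v.2.1 i0 - 2 * (-1) * v.1 - (-1) ^ 2 * v.2.2 i0))
  · -- some xᵢ is a unit, i ≠ i0
    have hne : i0 ≠ i := fun he => hx0 (he ▸ hxi)
    refine ⟨eps3 A n i0 i 1 v, Reach.single (eps3_mem hne 1) v, by rw [q_eps3 hne, hq], ?_⟩
    have hval : (eps3 A n i0 i 1 v).2.1 i0 = v.2.1 i0 + 1 * v.2.1 i := by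
      simp [eps3]
    rw [hval, one_mul]
    by_contra hcu
    have hmem := mem_maxIdeal_of_not_isUnit hcu
    have hmem0 := mem_maxIdeal_of_not_isUnit hx0
    have hxim : v.2.1 i ∈ IsLocalRing.maximalIdeal A := by
      have := Ideal.sub_mem _ hmem hmem0
      simpa using this
    exact not_isUnit_of_mem_maxIdeal hxim hxi

/-- Step 2: kill all the `yⱼ`, `j ≠ i0`, via `eps5`. -/
lemma step2 (i0 : Fin n) {v : OVec A n} (hx : IsUnit (v.2.1 i0)) :
    ∃ w : OVec A n, Reach A n v w ∧ qForm A n w = qForm A n v ∧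
      w.1 = v.1 ∧ w.2.1 = v.2.1 ∧ ∀ j, j ≠ i0 → w.2.2 j = 0 := by
  obtain ⟨c, hc⟩ := hx.exists_right_inv
  suffices h : ∀ s : Finset (Fin n), i0 ∉ s →
      ∃ w : OVec A n, Reach A n v w ∧ qForm A n w = qForm A n v ∧
        w.1 = v.1 ∧ w.2.1 = v.2.1 ∧ ∀ j ∈ s, w.2.2 j = 0 by
    obtain ⟨w, h1, h2, h3, h4, h5⟩ := h (Finset.univ.erase i0) (Finset.notMem_erase i0 _)
    exact ⟨w, h1, h2, h3, h4, fun j hj =>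
      h5 j (Finset.mem_erase.2 ⟨hj, Finset.mem_univ j⟩)⟩
  intro s
  induction s using Finset.induction_on with
  | empty => exact fun _ => ⟨v, Reach.refl v, rfl, rfl, rfl, by simp⟩
  | @insert a s ha ih =>
    intro hins
    have hi0s : i0 ∉ s := fun h => hins (Finset.mem_insert_of_mem h)
    have hai0 : a ≠ i0 := fun h => hins (h ▸ Finset.mem_insert_self a s)
    obtain ⟨w, h1, h2, h3, h4, h5⟩ := ih hi0s
    set l : A := -(w.2.2 a) * c with hl
    refine ⟨eps5 A n a i0 l w, h1.trans (Reach.single (eps5_mem hai0 l) w),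
      by rw [q_eps5 hai0, h2], h3, h4, ?_⟩
    intro j hj
    by_cases hja : j = a
    · have he : (eps5 A n a i0 l w).2.2 j = w.2.2 a + l * w.2.1 i0 := by
        rw [hja]
        simp [eps5, Function.update_of_ne hai0]
      rw [he, hl, h4]
      have he2 : -w.2.2 a * c * v.2.1 i0 = -(w.2.2 a) * (v.2.1 i0 * c) := by ring
      rw [he2, hc]
      ring
    · have hjs : j ∈ s := (Finset.mem_insert.1 hj).resolve_left hja
      have hji0 : j ≠ i0 := fun h => hi0s (h ▸ hjs)
      have he : (eps5 A n a i0 l w).2.2 j = w.2.2 j := by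
        simp [eps5, Function.update_of_ne hji0, Function.update_of_ne hja]
      rw [he]
      exact h5 j hjs

/-- Step 3: with `x_{i0}` a unit and `yⱼ = 0` for `j ≠ i0`, one `eps1` move sends
`z` to `1` and `y_{i0}` to `0`. -/
lemma step3 (i0 : Fin n) {v : OVec A n} (hq : qForm A n v = 1)
    (hx : IsUnit (v.2.1 i0)) (hy : ∀ j, j ≠ i0 → v.2.2 j = 0) :
    ∃ w : OVec A n, Reach A n v w ∧ w.1 = 1 ∧ w.2.2 = 0 := by
  obtain ⟨c, hc⟩ := hx.exists_right_inv
  set l : A := (1 - v.1) * c with hl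
  refine ⟨eps1 A n i0 l v, Reach.single (eps1_mem i0 l) v, ?_, ?_⟩
  · show v.1 + l * v.2.1 i0 = 1
    have : v.1 + (1 - v.1) * c * v.2.1 i0 = v.1 + (1 - v.1) * (v.2.1 i0 * c) := by ring
    rw [hl, this, hc]; ring
  · have hsum : (∑ i, v.2.1 i * v.2.2 i) = v.2.1 i0 * v.2.2 i0 := by
      refine Finset.sum_eq_single i0 (fun j _ hj => ?_) (fun h => absurd (Finset.mem_univ i0) h)
      rw [hy j hj, mul_zero]
    have hq' : v.2.1 i0 * v.2.2 i0 + v.1 * v.1 = 1 := by rw [← hsum]; exact hq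
    funext j
    show Function.update v.2.2 i0 (v.2.2 i0 - 2 * l * v.1 - l ^ 2 * v.2.1 i0) j = (0 : A)
    by_cases hj : j = i0
    · rw [hj, Function.update_self]
      -- multiply by the unit x_{i0}
      have hlx : l * v.2.1 i0 = 1 - v.1 := by
        rw [hl]
        have : (1 - v.1) * c * v.2.1 i0 = (1 - v.1) * (v.2.1 i0 * c) := by ring
        rw [this, hc, mul_one]
      have hkey : v.2.1 i0 * (v.2.2 i0 - 2 * l * v.1 - l ^ 2 * v.2.1 i0) = 0 := by
        have expand : v.2.1 i0 * (v.2.2 i0 - 2 * l * v.1 - l ^ 2 * v.2.1 i0)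
            = v.2.1 i0 * v.2.2 i0 - 2 * (l * v.2.1 i0) * v.1 - (l * v.2.1 i0) ^ 2 := by
          ring
        rw [expand, hlx]
        have : v.2.1 i0 * v.2.2 i0 - 2 * (1 - v.1) * v.1 - (1 - v.1) ^ 2
            = (v.2.1 i0 * v.2.2 i0 + v.1 * v.1) - 1 := by ring
        rw [this, hq', sub_self]
      calc v.2.2 i0 - 2 * l * v.1 - l ^ 2 * v.2.1 i0
          = v.2.1 i0 * c * (v.2.2 i0 - 2 * l * v.1 - l ^ 2 * v.2.1 i0) := by
            rw [hc, one_mul]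
        _ = c * (v.2.1 i0 * (v.2.2 i0 - 2 * l * v.1 - l ^ 2 * v.2.1 i0)) := by ring
        _ = 0 := by rw [hkey, mul_zero]
    · rw [Function.update_of_ne hj]
      exact hy j hj

/-- Step 4: with `z = 1` and `y = 0`, kill each `xⱼ` via `eps2` with `λ = xⱼ/2`. -/
lemma step4 [Invertible (2 : A)] {v : OVec A n} (hz : v.1 = 1) (hy : v.2.2 = 0) :
    Reach A n v ((1 : A), 0, 0) := by
  suffices h : ∀ s : Finset (Fin n), ∃ w : OVec A n, Reach A n v w ∧
      w.1 = 1 ∧ w.2.2 = 0 ∧ ∀ j ∈ s, w.2.1 j = 0 by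
    obtain ⟨w, h1, h2, h3, h4⟩ := h Finset.univ
    have hw : w = ((1 : A), 0, 0) := by
      have hx : w.2.1 = 0 := funext fun j => h4 j (Finset.mem_univ j)
      calc w = (w.1, w.2.1, w.2.2) := rfl
        _ = ((1 : A), 0, 0) := by rw [h2, hx, h3]
    rwa [hw] at h1
  intro s
  induction s using Finset.induction_on with
  | empty => exact ⟨v, Reach.refl v, hz, hy, by simp⟩
  | @insert a s ha ih =>
    obtain ⟨w, h1, h2, h3, h4⟩ := ih
    set l : A := ⅟(2 : A) * w.2.1 a with hl
    refine ⟨eps2 A n a l w, h1.trans (Reach.single (eps2_mem a l) w), ?_, ?_, ?_⟩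
    · show w.1 + l * w.2.2 a = 1
      rw [h3]; simp [h2]
    · exact h3
    · intro j hj
      by_cases hja : j = a
      · show Function.update w.2.1 a (w.2.1 a - 2 * l * w.1 - l ^ 2 * w.2.2 a) j = 0
        rw [hja, Function.update_self, h2, h3, hl]
        simp only [Pi.zero_apply, mul_zero, mul_one]
        have h2inv : (2 : A) * (⅟(2:A) * w.2.1 a) = w.2.1 a := by
          rw [← mul_assoc, mul_invOf_self, one_mul]
        rw [h2inv]
        ring
      · have hjs : j ∈ s := (Finset.mem_insert.1 hj).resolve_left hja
        show Function.update w.2.1 a (w.2.1 a - 2 * l * w.1 - l ^ 2 * w.2.2 a) j = 0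
        rw [Function.update_of_ne hja]
        exact h4 j hjs

end Aux

/-- Let `(A, m)` be a commutative local ring with `1/2 ∈ A`, `n ≥ 1`,
and `u ∈ Q'_{2n}(A)`.  Then some element `σ` of the elementary orthogonal group
`EO(A, q_{2n+1})`, i.e. some composition of elementary orthogonal transformations,
maps `u` to `u₀ = (1; 0,…,0; 0,…,0)`. -/
theorem elementary_transitive (A : Type*) [CommRing A] [IsLocalRing A]
    [Invertible (2 : A)] (n : ℕ) (hn : 1 ≤ n) (u : QPt' A n) :
    ∃ L : List (OVec A n → OVec A n), (∀ g ∈ L, g ∈ ElemOrth A n) ∧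
      L.foldr (· ∘ ·) id u.1 = ((1 : A), 0, 0) := by
  have i0 : Fin n := ⟨0, hn⟩
  obtain ⟨w1, r1, hq1, hx1⟩ := step1 i0 u.2
  obtain ⟨w2, r2, hq2, hz2, hx2, hy2⟩ := step2 i0 hx1
  have hq2' : qForm A n w2 = 1 := by rw [hq2, hq1]
  have hx2' : IsUnit (w2.2.1 i0) := by rw [hx2]; exact hx1
  obtain ⟨w3, r3, hz3, hy3⟩ := step3 i0 hq2' hx2' hy2
  have r4 := step4 hz3 hy3
  exact (((r1.trans r2).trans r3).trans r4)
end
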